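/- arXiv:2207.05903 — 8 statements merged into one kernel-verified Lean document; each statement's English description precedes it below -/
import Mathlib

section
/- For every integer sequence μ ∈ ℤ^k, the immaculate noncommutative symmetric function decomposes into complete homogeneous noncommutative symmetric functions as I_μ = Σ_γ ∏_{r=1}^{k} ε(h(r,τ_r))·H_{Δ(h(r,τ_r))}, where the sum is over all tunnel hook coverings γ (with chosen tunnel cells τ_1,…,τ_k) of the diagram D_μ = D_{μ/(0,…,0)}, and the noncommutative product is taken in the order r = 1, 2, …, k. -/
open scoped BigOperators

/-- NSym modeled as the free noncommutative ℚ-algebra on generators indexed by ℕ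
(the generator `n` playing the role of `H_n` for `n ≥ 1`). -/
abbrev NSym : Type := FreeAlgebra ℚ ℕ

/-- The complete homogeneous noncommutative symmetric functions, extended to ℤ:
`H 0 = 1`, `H n = 0` for `n < 0`, and `H n` the `n`-th generator for `n ≥ 1`. -/
noncomputable def H (n : ℤ) : NSym :=
  if n < 0 then 0 else if n = 0 then 1 else FreeAlgebra.ι ℚ n.toNat

/-- `DecFrom k r ν` : `ν_r ≥ ν_{r+1} ≥ … ≥ ν_k` (1-based indexing). -/
def DecFrom (k r : ℕ) (ν : ℕ → ℕ) : Prop :=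
  ∀ i, r ≤ i → i < k → ν (i + 1) ≤ ν i

/-- `(p,q)` is a boundary cell of the partial GBPR diagram `D^{(r-1)}_{μ/ν}`. -/
def IsBoundary (k r : ℕ) (μ : ℕ → ℤ) (ν : ℕ → ℕ) (p q : ℕ) : Prop :=
  r ≤ p ∧ p ≤ k ∧
    (if p = r then
      ν r + 1 ≤ q ∧ (q : ℤ) ≤ max ((ν r : ℤ) + 1) (max (μ r) (2 * (ν r : ℤ) - μ r))
    else
      ν p + 1 ≤ q ∧ q ≤ ν (p - 1) + 1)

/-- `(p,q)` is a tunnel cell of `D^{(r-1)}_{μ/ν}`. -/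
def IsTunnel (k r : ℕ) (μ : ℕ → ℤ) (ν : ℕ → ℕ) (p q : ℕ) : Prop :=
  IsBoundary k r μ ν p q ∧ q = ν p + 1

/-- The set of boundary cells of `D^{(r-1)}_{μ/ν}` not tunnel cells. -/
def IsN (k r : ℕ) (μ : ℕ → ℤ) (ν : ℕ → ℕ) (p q : ℕ) : Prop :=
  IsBoundary k r μ ν p q ∧ ¬ IsTunnel k r μ ν p q

/-- The tunnel hook `h(r,τ)` for a tunnel cell `τ = (p,q)` of `D^{(r-1)}_{μ/ν}`:
all boundary cells in rows `r` through `p`. -/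
def hook (k r : ℕ) (μ : ℕ → ℤ) (ν : ℕ → ℕ) (p : ℕ) : Set (ℕ × ℕ) :=
  {c : ℕ × ℕ | IsBoundary k r μ ν c.1 c.2 ∧ c.1 ≤ p}

/-- The value `Δ(h(r,τ)) = (μ_r − ν_r) + (ν_r + 1 − q) + (p − r)` for `τ = (p,q)`. -/
def hookDelta (μ : ℕ → ℤ) (ν : ℕ → ℕ) (r p q : ℕ) : ℤ :=
  (μ r - (ν r : ℤ)) + (((ν r : ℤ) + 1) - (q : ℤ)) + ((p : ℤ) - (r : ℤ))

/-- The update `ν ↦ ν^{(r)}`: `ν'_i = ν_{i-1} + 1` for `r < i ≤ p`, else `ν'_i = ν_i`. -/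
def nuUpdate (ν : ℕ → ℕ) (r p : ℕ) : ℕ → ℕ := fun i =>
  if r < i ∧ i ≤ p then ν (i - 1) + 1 else ν i

/-- The sequence `ν^{(0)}, ν^{(1)}, …` of intermediate shapes of a tunnel hook covering
with terminal rows `p 1, p 2, …`. -/
def nuSeq (ν₀ : ℕ → ℕ) (p : ℕ → ℕ) : ℕ → ℕ → ℕ
  | 0 => ν₀
  | r + 1 => nuUpdate (nuSeq ν₀ p r) (r + 1) (p (r + 1))

/-- A tunnel hook covering of `D_{μ/ν₀}` : for each `r = 1, …, k` a tunnel cell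
`(p r, q r)` of `D^{(r-1)}_{μ/ν^{(r-1)}}` (values outside `1 ≤ r ≤ k` normalized to `0`). -/
structure THC (k : ℕ) (μ : ℕ → ℤ) (ν₀ : ℕ → ℕ) where
  p : ℕ → ℕ
  q : ℕ → ℕ
  tunnel : ∀ r, 1 ≤ r → r ≤ k → IsTunnel k r μ (nuSeq ν₀ p (r - 1)) (p r) (q r)
  p_out : ∀ r, r = 0 ∨ k < r → p r = 0
  q_out : ∀ r, r = 0 ∨ k < r → q r = 0

/-- Row-ordered noncommutative determinant (Laplace expansion from the top row down). -/
noncomputable def ndet {k : ℕ} (A : Fin k → Fin k → NSym) : NSym :=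
  ∑ σ : Equiv.Perm (Fin k),
    ((Equiv.Perm.sign σ : ℤ) • (List.ofFn fun i => A i (σ i)).prod)

/-- The immaculate function `I_μ = ndet (H_{μ_i + j − i})` (1-based `μ`). -/
noncomputable def Imm (k : ℕ) (μ : ℕ → ℤ) : NSym :=
  ndet fun i j : Fin k => H (μ (i.1 + 1) + ((j.1 : ℤ) + 1) - ((i.1 : ℤ) + 1))

/-- The skew immaculate function `I_{μ/ν} = ndet (H_{(μ_i − i) − (ν_j − j)})`. -/
noncomputable def ImmSkew (k : ℕ) (μ ν : ℕ → ℤ) : NSym :=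
  ndet fun i j : Fin k =>
    H ((μ (i.1 + 1) - ((i.1 : ℤ) + 1)) - (ν (j.1 + 1) - ((j.1 : ℤ) + 1)))

/-- The signed product `∏_{r=1}^{k} ε(h(r,τ_r)) H_{Δ(h(r,τ_r))}` attached to a
tunnel hook covering, the product taken in the order `r = 1, …, k`. -/
noncomputable def thcTerm (k : ℕ) (μ : ℕ → ℤ) (ν₀ : ℕ → ℕ) (γ : THC k μ ν₀) : NSym :=
  (List.ofFn fun r : Fin k =>
    (-1 : NSym) ^ (γ.p (r.1 + 1) - (r.1 + 1)) *
      H (hookDelta μ (nuSeq ν₀ γ.p r.1) (r.1 + 1) (γ.p (r.1 + 1)) (γ.q (r.1 + 1)))).prod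
/-- Two cells are adjacent iff their taxicab distance is 1. -/
def Adj (c d : ℕ × ℕ) : Prop :=
  ((c.1 : ℤ) - (d.1 : ℤ)).natAbs + ((c.2 : ℤ) - (d.2 : ℤ)).natAbs = 1

/-- A set of cells is connected: any two of its cells are joined by a chain of
cells of the set in which consecutive cells are adjacent. -/
def ConnectedSet (C : Set (ℕ × ℕ)) : Prop :=
  ∀ c ∈ C, ∀ d ∈ C, ∃ l : List (ℕ × ℕ),
    l.head? = some c ∧ l.getLast? = some d ∧ (∀ x ∈ l, x ∈ C) ∧ l.Chain' Adj

/-- `m_r = #{ i < r : σ_i > σ_r }`. -/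
def mcount {k : ℕ} (σ : Equiv.Perm (Fin k)) (r : Fin k) : ℕ :=
  (Finset.univ.filter fun i : Fin k => i < r ∧ σ r < σ i).card

/-- The set `{σ_{r+1}, …, σ_k}` of one-line (1-based) values of `σ` at positions `> r`. -/
def onelineTail {k : ℕ} (σ : Equiv.Perm (Fin k)) (r : ℕ) : Finset ℕ :=
  (Finset.univ.filter fun i : Fin k => r < i.1 + 1).image fun i => (σ i).1 + 1

/-- `beta σ r t` : the `t`-th smallest element of `{σ_{r+1}, …, σ_k}`. -/
def beta {k : ℕ} (σ : Equiv.Perm (Fin k)) (r t : ℕ) : ℕ :=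
  ((onelineTail σ r).sort (· ≤ ·)).getD (t - 1) 0

/-- The exponent `δ` in the sign of a linear permutation `π ∈ A_{k,m}`. -/
def lpInv {k m : ℕ} (π : Fin m ↪ Fin k) : ℕ :=
  (Finset.univ.filter fun p : Fin m × Fin m => p.1 < p.2 ∧ π p.2 < π p.1).card +
  (Finset.univ.filter fun p : Fin m × Fin k => (∀ t, π t ≠ p.2) ∧ p.2 < π p.1).card

/-- `betaC π j` : the `j`-th smallest element of `{1,…,k} ∖ {π_1,…,π_m}` (1-based values). -/
def betaC {k m : ℕ} (π : Fin m ↪ Fin k) (j : ℕ) : ℕ :=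
  (((Finset.univ.filter fun q : Fin k => ∀ t, π t ≠ q).image fun q => q.1 + 1).sort
    (· ≤ ·)).getD (j - 1) 0

/-- Coarsening `Θ(α,S)` of a sequence: replace the comma at each position in `S`
(1-based; position `i` lies between parts `i` and `i+1`) by addition. -/
def theta {α : Type} [Add α] (S : Finset ℕ) : ℕ → List α → List α
  | _, [] => []
  | _, [a] => [a]
  | i, a :: b :: rest =>
      if i ∈ S then theta S (i + 1) ((a + b) :: rest)
      else a :: theta S (i + 1) (b :: rest)
  termination_by i l => l.length

noncomputable def Hlist (β : List ℤ) : NSym := (β.map H).prod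

/-- The ribbon function `R_β = Σ_{γ ⪰ β} (−1)^{ℓ(β)−ℓ(γ)} H_γ`, with `R_β = 0`
whenever `β` has a part `≤ 0`. -/
noncomputable def Ribbon (β : List ℤ) : NSym :=
  if ∀ x ∈ β, 0 < x then
    ∑ S ∈ (Finset.Icc 1 (β.length - 1)).powerset,
      (-1 : NSym) ^ (β.length - (theta S 1 β).length) * Hlist (theta S 1 β)
  else 0


/-!
The tunnel hook coverings of `D_μ` are in bijection with `S_k` through Lehmer codes: the covering
attached to `σ` ends its `r`-th hook in row `p_r = r + m_r`, where `m_r = #{s > r | σ_s < σ_r}`,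
and the numbers `m_r ∈ {0, …, k - r}` determine `σ`. By induction on `r`, for `r < i ≤ k` one has
`ν^{(r)}_i = i - t`, where `t` is the `(i - r)`-th smallest of `σ_{r+1}, …, σ_k`. Taking `i = p_r`
gives `t = σ_r`, so the `r`-th tunnel cell lies in column `p_r - σ_r + 1` and
`Δ(h(r, τ_r)) = μ_r + σ_r - r`, while `∏ ε(h(r, τ_r)) = (-1)^{Σ m_r} = sign σ`. Hence the covering
attached to `σ` contributes exactly the `σ`-term of the noncommutative determinant `I_μ`.
-/

open Finset

section RankIn

variable {α : Type*} [LinearOrder α] {T : Finset α} {x y c : α}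

def rankIn (T : Finset α) (x : α) : ℕ := #{y ∈ T | y ≤ x}

lemma rankIn_mono (T : Finset α) : Monotone (rankIn T) := fun _ _ hxy =>
  card_le_card (monotone_filter_right T fun _ _ h => h.trans hxy)

lemma rankIn_lt_rankIn (hy : y ∈ T) (hxy : x < y) : rankIn T x < rankIn T y :=
  card_lt_card <| (ssubset_iff_of_subset (monotone_filter_right T fun _ _ h => h.trans hxy.le)).2
    ⟨y, by simp [hy], by simp [hxy]⟩

lemma rankIn_injOn : Set.InjOn (rankIn T) T := by
  intro x hx y hy h
  by_contra hne
  rcases lt_or_gt_of_ne hne with hlt | hlt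
  · exact (rankIn_lt_rankIn hy hlt).ne h
  · exact (rankIn_lt_rankIn hx hlt).ne' h

lemma rankIn_erase_of_lt (h : x < c) : rankIn (T.erase c) x = rankIn T x := by
  rw [rankIn, rankIn, filter_erase, erase_eq_of_notMem]
  simp [not_le.2 h]

lemma rankIn_erase_of_le (hc : c ∈ T) (h : c ≤ x) : rankIn (T.erase c) x = rankIn T x - 1 := by
  rw [rankIn, rankIn, filter_erase, card_erase_of_mem (mem_filter.2 ⟨hc, h⟩)]

end RankIn

namespace Equiv.Perm

variable {k : ℕ} (σ : Perm (Fin k))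

def lehmer (i : Fin k) : ℕ := #{s | i < s ∧ σ s < σ i}

lemma lehmer_lt (i : Fin k) : lehmer σ i < k - i :=
  calc lehmer σ i ≤ #(Ioi i) := card_le_card fun s hs => by simpa using (mem_filter.1 hs).2.1
    _ < k - i := by rw [Fin.card_Ioi]; omega

lemma sign_eq_signAux : sign σ = signAux σ := by
  induction σ using swap_induction_on with
  | one => simp [signAux_one]
  | swap_mul f x y hxy ih => rw [sign_mul, signAux_mul, sign_swap hxy, signAux_swap hxy, ih]

lemma card_inversions_eq_sum_lehmer :
    #{x ∈ finPairsLT k | σ x.1 ≤ σ x.2} = ∑ i, lehmer σ i := by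
  rw [card_eq_sum_card_fiberwise (f := Sigma.snd) (t := univ) fun _ _ => mem_univ _]
  refine sum_congr rfl fun i _ => card_nbij' Sigma.fst (fun s => ⟨s, i⟩) ?_ ?_ ?_ ?_
  · rintro ⟨a, b⟩ h
    simp only [mem_coe, mem_filter, mem_finPairsLT, mem_univ, true_and] at h ⊢
    obtain ⟨⟨hba, hle⟩, rfl⟩ := h
    exact ⟨hba, hle.lt_of_ne (σ.injective.ne hba.ne')⟩
  · intro s hs
    simp only [mem_coe, mem_filter, mem_finPairsLT, mem_univ, true_and] at hs ⊢
    exact ⟨⟨hs.1, hs.2.le⟩, trivial⟩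
  · rintro ⟨a, b⟩ h
    simp only [mem_coe, mem_filter] at h
    rw [h.2]
  · intro s _
    rfl

lemma sign_eq_neg_one_pow_sum_lehmer : (sign σ : ℤ) = (-1) ^ ∑ i, lehmer σ i := by
  rw [sign_eq_signAux, signAux, prod_ite, prod_const, prod_const, one_pow, mul_one,
    card_inversions_eq_sum_lehmer]
  simp

end Equiv.Perm

section OnelineTail

open Equiv.Perm

variable {k : ℕ} (σ : Equiv.Perm (Fin k))

lemma onelineTail_zero : onelineTail σ 0 = Icc 1 k := by
  ext v
  simp only [onelineTail, mem_image, mem_filter, mem_univ, true_and, mem_Icc]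
  constructor
  · rintro ⟨s, -, rfl⟩
    omega
  · rintro ⟨h1, h2⟩
    exact ⟨σ.symm ⟨v - 1, by omega⟩, by omega, by simp; omega⟩

lemma onelineTail_succ (i : Fin k) :
    onelineTail σ (i + 1) = (onelineTail σ i).erase ((σ i : ℕ) + 1) := by
  have hinj : Function.Injective fun s : Fin k => (σ s : ℕ) + 1 := fun a b h =>
    σ.injective (Fin.ext (by simpa using h))
  rw [onelineTail, onelineTail, ← image_erase hinj]
  congr 1
  ext s
  simp only [mem_filter, mem_univ, true_and, mem_erase, ne_eq, ← Fin.val_inj]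
  omega

lemma mem_onelineTail_self (i : Fin k) : (σ i : ℕ) + 1 ∈ onelineTail σ i :=
  mem_image.2 ⟨i, by simp, rfl⟩

lemma rankIn_onelineTail_self (i : Fin k) :
    rankIn (onelineTail σ i) ((σ i : ℕ) + 1) = lehmer σ i + 1 := by
  have hfilter : filter (fun s : Fin k => i.1 < s.1 + 1 ∧ (σ s : ℕ) + 1 ≤ (σ i : ℕ) + 1) univ =
      insert i (filter (fun s => i < s ∧ σ s < σ i) univ) := by
    ext s
    have := σ.injective.eq_iff (a := s) (b := i)
    simp only [mem_filter, mem_univ, true_and, mem_insert, Fin.lt_def, ← Fin.val_inj] at this ⊢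
    omega
  rw [rankIn, onelineTail, filter_image, card_image_of_injective _ fun a b h =>
    σ.injective (Fin.ext (by simpa using h)), filter_filter, hfilter,
    card_insert_of_notMem (by simp), lehmer]

end OnelineTail

namespace Equiv.Perm

lemma lehmer_injective {k : ℕ} : Function.Injective (lehmer (k := k)) := by
  intro σ τ h
  have agree : ∀ r ≤ k,
      onelineTail σ r = onelineTail τ r ∧ ∀ s : Fin k, s.1 < r → σ s = τ s := by
    intro r
    induction r with
    | zero => simp [onelineTail_zero]
    | succ r ih =>
      intro hr
      obtain ⟨htail, hlt⟩ := ih (by omega)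
      let i : Fin k := ⟨r, hr⟩
      have htail_i : onelineTail σ i = onelineTail τ i := htail
      have hi : σ i = τ i := by
        have hmem := mem_onelineTail_self τ i
        rw [← htail_i] at hmem
        have := rankIn_injOn (mem_onelineTail_self σ i) hmem <| by
          rw [rankIn_onelineTail_self, htail_i, rankIn_onelineTail_self, h]
        exact Fin.ext (by simpa using this)
      refine ⟨?_, fun s hs => ?_⟩
      · rw [show r + 1 = (i : ℕ) + 1 from rfl, onelineTail_succ, onelineTail_succ, hi, htail_i]
      · rcases Nat.lt_succ_iff_lt_or_eq.1 hs with hs | hs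
        · exact hlt s hs
        · rwa [show s = i from Fin.ext hs]
  exact Equiv.ext fun s => (agree k le_rfl).2 s s.2

end Equiv.Perm

lemma Fin.prod_univ_sub_eq_factorial (k : ℕ) : ∏ i : Fin k, (k - i) = k.factorial := by
  rw [Fin.prod_univ_eq_prod_range (k - ·), ← Nat.descFactorial_eq_prod_range,
    Nat.descFactorial_self]

namespace Equiv.Perm

def lehmerCode {k : ℕ} (σ : Perm (Fin k)) (i : Fin k) : Fin (k - i) := ⟨lehmer σ i, lehmer_lt σ i⟩

lemma lehmerCode_bijective {k : ℕ} : Function.Bijective (lehmerCode (k := k)) := by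
  rw [Fintype.bijective_iff_injective_and_card, Fintype.card_perm, Fintype.card_pi]
  refine ⟨fun σ τ h => lehmer_injective (funext fun i => congrArg Fin.val (congrFun h i)), ?_⟩
  simp only [Fintype.card_fin, Fin.prod_univ_sub_eq_factorial]

end Equiv.Perm

lemma DecFrom.nuUpdate {k r : ℕ} {ν : ℕ → ℕ} (h : DecFrom k r ν) (p : ℕ) :
    DecFrom k (r + 1) (nuUpdate ν r p) := by
  intro i hri hik
  have hprev := h (i - 1) (by omega) (by omega)
  rw [Nat.sub_add_cancel (by omega)] at hprev
  unfold _root_.nuUpdate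
  simp only [Nat.add_sub_cancel]
  split_ifs <;> grind [h i (by omega) hik]

lemma decFrom_nuSeq {k : ℕ} {ν₀ : ℕ → ℕ} (h₀ : DecFrom k 1 ν₀) (p : ℕ → ℕ) :
    ∀ r, DecFrom k (r + 1) (nuSeq ν₀ p r)
  | 0 => h₀
  | r + 1 => (decFrom_nuSeq h₀ p r).nuUpdate _

lemma isTunnel_of_decFrom {k r p : ℕ} (μ : ℕ → ℤ) {ν : ℕ → ℕ} (h : DecFrom k r ν) (hrp : r ≤ p)
    (hpk : p ≤ k) : IsTunnel k r μ ν p (ν p + 1) := by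
  refine ⟨⟨hrp, hpk, ?_⟩, rfl⟩
  split_ifs with hpr
  · subst hpr
    exact ⟨le_rfl, by push_cast; exact le_max_left _ _⟩
  · have := h (p - 1) (by omega) (by omega)
    rw [Nat.sub_add_cancel (by omega)] at this
    omega

lemma hookDelta_tunnel (μ : ℕ → ℤ) (ν : ℕ → ℕ) (r p : ℕ) :
    hookDelta μ ν r p (ν p + 1) = μ r + ((p : ℤ) - ν p) - r := by
  unfold hookDelta
  push_cast
  ring

lemma THC.ext_of_p {k : ℕ} {μ : ℕ → ℤ} {ν₀ : ℕ → ℕ} {γ γ' : THC k μ ν₀} (h : γ.p = γ'.p) :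
    γ = γ' := by
  obtain ⟨p, q, hq, _, hq_out⟩ := γ
  obtain ⟨p', q', hq', _, hq_out'⟩ := γ'
  simp only at h
  subst h
  obtain rfl : q = q' := funext fun r => by
    by_cases hr : 1 ≤ r ∧ r ≤ k
    · rw [(hq r hr.1 hr.2).2, (hq' r hr.1 hr.2).2]
    · rw [hq_out r (by omega), hq_out' r (by omega)]
  rfl

lemma THC.p_mem_Icc {k : ℕ} {μ : ℕ → ℤ} {ν₀ : ℕ → ℕ} (γ : THC k μ ν₀) {r : ℕ} (h1 : 1 ≤ r)
    (h2 : r ≤ k) : γ.p r ∈ Set.Icc r k :=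
  ⟨(γ.tunnel r h1 h2).1.1, (γ.tunnel r h1 h2).1.2.1⟩

namespace Equiv.Perm

variable {k : ℕ} (σ : Perm (Fin k))

def hookRow (r : ℕ) : ℕ := if h : 0 < r ∧ r ≤ k then r + lehmer σ ⟨r - 1, by omega⟩ else 0

lemma hookRow_succ (i : Fin k) : hookRow σ (i + 1) = i + 1 + lehmer σ i := by
  simp [hookRow, Nat.succ_le_of_lt i.2]

lemma hookRow_eq_zero {r : ℕ} (h : r = 0 ∨ k < r) : hookRow σ r = 0 :=
  dif_neg (by omega)

lemma hookRow_mem_Icc {r : ℕ} (h1 : 1 ≤ r) (h2 : r ≤ k) : hookRow σ r ∈ Set.Icc r k := by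
  obtain ⟨i, rfl⟩ : ∃ i : Fin k, r = i + 1 := ⟨⟨r - 1, by omega⟩, by simp; omega⟩
  rw [hookRow_succ, Set.mem_Icc]
  have := lehmer_lt σ i
  omega

lemma exists_nuSeq_hookRow_add (r : ℕ) (hr : r ≤ k) (i : ℕ) (hri : r < i) (hik : i ≤ k) :
    ∃ t ∈ onelineTail σ r,
      nuSeq (fun _ => 0) (hookRow σ) r i + t = i ∧ rankIn (onelineTail σ r) t = i - r := by
  induction r generalizing i with
  | zero =>
    refine ⟨i, by rw [onelineTail_zero]; simp; omega, by simp [nuSeq], ?_⟩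
    rw [onelineTail_zero, rankIn, show filter (· ≤ i) (Icc 1 k) = Icc 1 i by ext; simp; omega,
      Nat.card_Icc]
    omega
  | succ r ih =>
    let j : Fin k := ⟨r, hr⟩
    have hrank := rankIn_onelineTail_self σ j
    have htail : onelineTail σ (r + 1) = (onelineTail σ r).erase ((σ j : ℕ) + 1) :=
      onelineTail_succ σ j
    have hrow : hookRow σ (r + 1) = r + 1 + lehmer σ j := hookRow_succ σ j
    simp only [nuSeq, nuUpdate, htail, hrow]
    -- rows up to `p_{r+1}` inherit their value from the row above, which ranks below `σ_{r+1}`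
    by_cases hip : i ≤ r + 1 + lehmer σ j
    · obtain ⟨t, ht, hνt, hrt⟩ := ih (by omega) (i - 1) (by omega) (by omega)
      have hlt : t < (σ j : ℕ) + 1 :=
        (rankIn_mono _).reflect_lt (by rw [hrt]; exact hrank ▸ by omega)
      refine ⟨t, mem_erase.2 ⟨hlt.ne, ht⟩, ?_, by rw [rankIn_erase_of_lt hlt, hrt]; omega⟩
      rw [if_pos ⟨by omega, hip⟩]
      omega
    · obtain ⟨t, ht, hνt, hrt⟩ := ih (by omega) i (by omega) hik
      have hlt : (σ j : ℕ) + 1 < t :=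
        (rankIn_mono _).reflect_lt (by rw [hrt]; exact hrank ▸ by omega)
      refine ⟨t, mem_erase.2 ⟨hlt.ne', ht⟩, ?_, ?_⟩
      · rwa [if_neg (by omega)]
      · rw [rankIn_erase_of_le (mem_onelineTail_self σ j) hlt.le, hrt]
        omega

lemma nuSeq_hookRow_add_self (i : Fin k) :
    nuSeq (fun _ => 0) (hookRow σ) i (hookRow σ (i + 1)) + ((σ i : ℕ) + 1) =
      hookRow σ (i + 1) := by
  obtain ⟨hlo, hhi⟩ := hookRow_mem_Icc σ (r := i + 1) (by omega) (by omega)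
  obtain ⟨t, ht, hνt, hrt⟩ :=
    exists_nuSeq_hookRow_add σ i (by omega) (hookRow σ (i + 1)) (by omega) hhi
  have : t = (σ i : ℕ) + 1 := rankIn_injOn ht (mem_onelineTail_self σ i) <| by
    rw [hrt, rankIn_onelineTail_self, hookRow_succ]
    omega
  rwa [← this]

end Equiv.Perm

open Equiv.Perm

def thcOfPerm {k : ℕ} (μ : ℕ → ℤ) (σ : Equiv.Perm (Fin k)) : THC k μ (fun _ => 0) where
  p := hookRow σ
  q r := if 1 ≤ r ∧ r ≤ k then nuSeq (fun _ => 0) (hookRow σ) (r - 1) (hookRow σ r) + 1 else 0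
  tunnel r h1 h2 := by
    have hdec : DecFrom k (r - 1 + 1) (nuSeq (fun _ => 0) (hookRow σ) (r - 1)) :=
      decFrom_nuSeq (fun _ _ _ => le_rfl) _ _
    rw [Nat.sub_add_cancel h1] at hdec
    rw [if_pos ⟨h1, h2⟩]
    exact isTunnel_of_decFrom μ hdec (hookRow_mem_Icc σ h1 h2).1 (hookRow_mem_Icc σ h1 h2).2
  p_out _ h := hookRow_eq_zero σ h
  q_out _ h := if_neg (by omega)

lemma List.prod_ofFn_neg_one_pow_mul {R : Type*} [Ring R] {n : ℕ} (e : Fin n → ℕ)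
    (A : Fin n → R) :
    (List.ofFn fun i => (-1 : R) ^ e i * A i).prod = (-1) ^ (∑ i, e i) * (List.ofFn A).prod := by
  induction n with
  | zero => simp
  | succ n ih =>
    rw [List.ofFn_succ, List.ofFn_succ, List.prod_cons, List.prod_cons,
      ih (fun i => e i.succ) (fun i => A i.succ), Fin.sum_univ_succ, pow_add,
      mul_assoc, mul_assoc]
    exact congrArg _ ((((Commute.neg_one_left (A 0)).pow_left _).left_comm _).symm)

lemma thcTerm_thcOfPerm {k : ℕ} (μ : ℕ → ℤ) (σ : Equiv.Perm (Fin k)) :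
    thcTerm k μ (fun _ => 0) (thcOfPerm μ σ) =
      (sign σ : ℤ) • (List.ofFn fun i : Fin k =>
        H (μ (i.1 + 1) + (((σ i).1 : ℤ) + 1) - ((i.1 : ℤ) + 1))).prod := by
  have hfactor : ∀ i : Fin k,
      (-1 : NSym) ^ ((thcOfPerm μ σ).p (i + 1) - (i + 1)) *
        H (hookDelta μ (nuSeq (fun _ => 0) (thcOfPerm μ σ).p i) (i + 1)
          ((thcOfPerm μ σ).p (i + 1)) ((thcOfPerm μ σ).q (i + 1))) =
      (-1) ^ lehmer σ i * H (μ (i + 1) + (((σ i : ℕ) : ℤ) + 1) - ((i : ℤ) + 1)) := by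
    intro i
    have hq : (thcOfPerm μ σ).q (i + 1) =
        nuSeq (fun _ => 0) (hookRow σ) i (hookRow σ (i + 1)) + 1 := if_pos ⟨by omega, by omega⟩
    have hcol := nuSeq_hookRow_add_self σ i
    change (-1 : NSym) ^ (hookRow σ (i + 1) - (i + 1)) *
      H (hookDelta μ (nuSeq (fun _ => 0) (hookRow σ) i) (i + 1) (hookRow σ (i + 1))
        ((thcOfPerm μ σ).q (i + 1))) = _
    rw [hq, hookDelta_tunnel]
    rw [hookRow_succ] at hcol ⊢
    congr 2
    · omega
    · push_cast
      omega
  rw [thcTerm]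
  simp only [hfactor]
  rw [List.prod_ofFn_neg_one_pow_mul, zsmul_eq_mul, sign_eq_neg_one_pow_sum_lehmer]
  push_cast
  rfl

lemma thcOfPerm_bijective {k : ℕ} (μ : ℕ → ℤ) : Function.Bijective (thcOfPerm (k := k) μ) := by
  refine ⟨fun σ τ h => lehmer_injective (funext fun i => ?_), fun γ => ?_⟩
  · have := congrFun (congrArg THC.p h) (i + 1)
    simp only [thcOfPerm, hookRow_succ] at this
    omega
  · obtain ⟨σ, hσ⟩ := lehmerCode_bijective.2 fun i : Fin k =>
      ⟨γ.p (i + 1) - (i + 1), by have := (γ.p_mem_Icc (r := i + 1) (by omega) i.2).2; omega⟩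
    refine ⟨σ, THC.ext_of_p (funext fun r => ?_)⟩
    by_cases hr : 1 ≤ r ∧ r ≤ k
    · obtain ⟨i, rfl⟩ : ∃ i : Fin k, r = i + 1 := ⟨⟨r - 1, by omega⟩, by simp; omega⟩
      have hi := congrArg Fin.val (congrFun hσ i)
      simp only [lehmerCode] at hi
      have := (γ.p_mem_Icc hr.1 hr.2).1
      simp only [thcOfPerm, hookRow_succ]
      omega
    · rw [γ.p_out r (by omega)]
      exact hookRow_eq_zero σ (by omega)

theorem immaculate_eq_sum_tunnel_hook_coverings_general (k : ℕ) (μ : ℕ → ℤ) :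
    Imm k μ = ∑ᶠ γ : THC k μ (fun _ => 0), thcTerm k μ (fun _ => 0) γ := by
  rw [← finsum_eq_of_bijective _ (thcOfPerm_bijective μ) fun _ => rfl, finsum_eq_sum_of_fintype]
  exact sum_congr rfl fun σ _ => (thcTerm_thcOfPerm μ σ).symm

/-- **Theorem 1 (main).** For every integer sequence `μ ∈ ℤ^k`, the immaculate
function decomposes as `I_μ = Σ_{γ ∈ THC_μ} ∏_{r=1}^{k} ε(h(r,τ_r)) H_{Δ(h(r,τ_r))}`,
the sum being over all tunnel hook coverings of `D_μ` and the product taken in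
the order `r = 1, …, k`. -/
theorem immaculate_eq_sum_tunnel_hook_coverings (k : ℕ) (hk : 1 ≤ k) (μ : ℕ → ℤ) :
    Imm k μ = ∑ᶠ γ : THC k μ (fun _ => 0), thcTerm k μ (fun _ => 0) γ :=
  immaculate_eq_sum_tunnel_hook_coverings_general k μ
end

section
/- Let μ ∈ ℤ^k, 1 ≤ r ≤ k, and ν ∈ (ℤ_{≥0})^k with ν_r ≥ ν_{r+1} ≥ … ≥ ν_k. If (p,q) is a boundary cell of the partial GBPR diagram D^{(r−1)}_{μ/ν}, then (p+1,q+1) is not a boundary cell of D^{(r−1)}_{μ/ν}. -/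
open scoped BigOperators

/-- **Lemma (boundary diagonal).** If `(p,q)` is a boundary cell of `D^{(r−1)}_{μ/ν}`,
then `(p+1,q+1)` is not. -/
theorem not_boundary_diag (k r : ℕ) (hr1 : 1 ≤ r) (hrk : r ≤ k) (μ : ℕ → ℤ)
    (ν : ℕ → ℕ) (hν : DecFrom k r ν) (p q : ℕ)
    (h : IsBoundary k r μ ν p q) :
    ¬ IsBoundary k r μ ν (p + 1) (q + 1) := by
  rintro ⟨hr', hk', h2⟩
  obtain ⟨hrp, hpk, h1⟩ := h
  rw [if_neg (by omega : p + 1 ≠ r)] at h2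
  simp only [Nat.add_sub_cancel] at h2
  by_cases hp : p = r
  · rw [if_pos hp] at h1
    subst hp
    omega
  · rw [if_neg hp] at h1
    omega
end

section
/- Let μ ∈ ℤ^k, 1 ≤ r ≤ k, and ν ∈ (ℤ_{≥0})^k with ν_r ≥ ν_{r+1} ≥ … ≥ ν_k. For any fixed j ∈ ℤ, there is at most one tunnel cell τ of D^{(r−1)}_{μ/ν} with Δ(h(r,τ)) = j; that is, the map τ ↦ Δ(h(r,τ)) is injective on the set of tunnel cells T^{(r−1)}_{μ/ν}. -/
open scoped BigOperators

lemma decFrom_le (k r : ℕ) (ν : ℕ → ℕ) (hν : DecFrom k r ν) :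
    ∀ a b, r ≤ a → a ≤ b → b ≤ k → ν b ≤ ν a := by
  intro a b ha hab hbk
  induction b with
  | zero =>
    have : a = 0 := by omega
    simp [this]
  | succ n ih =>
    rcases Nat.lt_or_ge a (n + 1) with hlt | hge
    · have h1 : ν (n + 1) ≤ ν n := hν n (by omega) (by omega)
      exact le_trans h1 (ih (by omega) (by omega))
    · have : a = n + 1 := by omega
      simp [this]

/-- **Lemma (unique lengths).** For a fixed `j ∈ ℤ` there is at most one tunnel cell `τ`
of `D^{(r−1)}_{μ/ν}` with `Δ(h(r,τ)) = j`: the map `τ ↦ Δ(h(r,τ))` is injective on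
tunnel cells. -/
theorem hookDelta_injective_on_tunnel_cells (k r : ℕ) (hr1 : 1 ≤ r) (hrk : r ≤ k)
    (μ : ℕ → ℤ) (ν : ℕ → ℕ) (hν : DecFrom k r ν) (p q p' q' : ℕ)
    (h : IsTunnel k r μ ν p q) (h' : IsTunnel k r μ ν p' q')
    (heq : hookDelta μ ν r p q = hookDelta μ ν r p' q') :
    (p, q) = (p', q') := by
  obtain ⟨⟨hrp, hpk, _⟩, hq⟩ := h
  obtain ⟨⟨hrp', hpk', _⟩, hq'⟩ := h'
  have key : (p : ℤ) - (ν p : ℤ) = (p' : ℤ) - (ν p' : ℤ) := by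
    simp only [hookDelta, hq, hq'] at heq
    push_cast at heq ⊢
    linarith
  have hpp : p = p' := by
    rcases lt_trichotomy p p' with hlt | heq2 | hgt
    · have := decFrom_le k r ν hν p p' hrp (by omega) hpk'
      omega
    · exact heq2
    · have := decFrom_le k r ν hν p' p hrp' (by omega) hpk
      omega
  subst hpp
  simp [hq, hq']
end

section
/- Let μ ∈ ℤ^k, let σ ∈ S_k, and let γ be the tunnel hook covering of D_μ corresponding to σ (so its terminal cells are τ_r = (σ_r + m_r, 1 + m_r) with m_r = #{ i < r : σ_i > σ_r }), with intermediate sequences ν^{(0)}, ν^{(1)}, …, ν^{(k)}. Then for every 0 ≤ r < k and every j with r < j ≤ k, ν^{(r)}_j equals the number of entries among σ_1, σ_2, …, σ_r that are greater than β_{σ,r,j−r}, where β_{σ,r,j−r} denotes the (j−r)-th smallest element of the set {σ_{r+1}, σ_{r+2}, …, σ_k}. -/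
open scoped BigOperators

/-!
Write `rank_r b` for the number of entries of `{σ_{r+1}, …, σ_k}` below `b`. By induction on
`r`, for every `b` in that set, `ν^{(r)}` at position `r + 1 + rank_r b` is the number of
`i ≤ r` with `σ_i > b`. From `r` to `r + 1` the value `v = σ_{r+1}` leaves the set, and the
terminal row `σ_{r+1} + m_{r+1}` equals `r + 1 + rank_{r+1} v`. Hence the update
`ν^{(r)} ↦ ν^{(r+1)}` moves the entries attached to values `b < v` down one row and adds one to
them, just as `σ_{r+1} > b` joins the count, while the entries attached to `b > v` keep their
row and their count.
-/

open Finset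

theorem Finset.card_filter_lt_lt_iff {α : Type*} [LinearOrder α] {S : Finset α} {a : α}
    (ha : a ∈ S) (b : α) : #{x ∈ S | x < a} < #{x ∈ S | x < b} ↔ a < b := by
  constructor
  · intro h
    by_contra! hba
    exact h.not_ge <|
      card_le_card (monotone_filter_right S fun x _ (hx : x < b) => hx.trans_le hba)
  · intro hab
    refine card_lt_card ((ssubset_iff_of_subset ?_).2 ⟨a, by simp [ha, hab]⟩)
    exact monotone_filter_right S fun x _ (hx : x < a) => hx.trans hab

theorem Finset.card_filter_lt_insert {α : Type*} [LinearOrder α] {S : Finset α} {v : α}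
    (hv : v ∉ S) (b : α) :
    #{x ∈ insert v S | x < b} = #{x ∈ S | x < b} + if v < b then 1 else 0 := by
  rw [filter_insert]
  split_ifs
  · exact card_insert_of_notMem fun h => hv (mem_filter.1 h).1
  · rfl

theorem Nat.count_mem_eq_card_filter_lt (S : Finset ℕ) (n : ℕ) :
    Nat.count (· ∈ S) n = #{x ∈ S | x < n} := by
  rw [Nat.count_eq_card_filter_range]
  congr 1
  ext x
  simp [and_comm]

theorem Finset.sort_getD_mem_and_card_filter_lt {S : Finset ℕ} {t : ℕ} (ht : t < #S) :
    S.sort.getD t 0 ∈ S ∧ #{x ∈ S | x < S.sort.getD t 0} = t := by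
  have hS : (Set.ofPred (· ∈ S)).Finite := S.finite_toSet
  have hS' : hS.toFinset = S := by ext; simp [Set.ofPred]
  rw [← hS'] at ht
  rw [← Nat.count_mem_eq_card_filter_lt, ← hS', ← Nat.nth_eq_getD_sort hS, hS']
  exact ⟨Nat.nth_mem_of_lt_card hS ht, Nat.count_nth_of_lt_card_finite hS ht⟩

section Oneline

variable {k : ℕ} (σ : Equiv.Perm (Fin k))

theorem oneline_injective : Function.Injective fun i => (σ i).1 + 1 :=
  fun _ _ h => σ.injective (Fin.ext (by simpa using h))

theorem onelineTail_eq_insert {ρ : ℕ} (hρ : ρ < k) :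
    onelineTail σ ρ = insert ((σ ⟨ρ, hρ⟩).1 + 1) (onelineTail σ (ρ + 1)) := by
  have h : univ.filter (fun i : Fin k => ρ < i.1 + 1) =
      insert ⟨ρ, hρ⟩ (univ.filter fun i : Fin k => ρ + 1 < i.1 + 1) := by
    ext i
    simp only [mem_filter, mem_univ, true_and, mem_insert, Fin.ext_iff]
    omega
  rw [onelineTail, onelineTail, h, image_insert]

theorem notMem_onelineTail_succ {ρ : ℕ} (hρ : ρ < k) :
    (σ ⟨ρ, hρ⟩).1 + 1 ∉ onelineTail σ (ρ + 1) := by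
  simp only [onelineTail, mem_image, mem_filter, mem_univ, true_and, add_left_inj, Fin.val_inj,
    EmbeddingLike.apply_eq_iff_eq, not_exists, not_and]
  rintro i hi rfl
  simp at hi

theorem card_onelineTail (r : ℕ) : #(onelineTail σ r) = k - r := by
  rw [onelineTail, card_image_of_injective _ (oneline_injective σ)]
  have h := card_filter_add_card_filter_not (s := univ) (fun i : Fin k => (i : ℕ) < r)
  rw [Fin.card_filter_val_lt, card_univ, Fintype.card_fin] at h
  have h' : univ.filter (fun i : Fin k => r < i.1 + 1) =
      univ.filter fun i : Fin k => ¬ (i : ℕ) < r := by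
    ext i
    simp only [mem_filter, mem_univ, true_and]
    omega
  rw [h']
  omega

theorem card_filter_onelineTail_lt (r b : ℕ) :
    #{x ∈ onelineTail σ r | x < b} = #{i : Fin k | r < i.1 + 1 ∧ (σ i).1 + 1 < b} := by
  rw [onelineTail, filter_image, card_image_of_injective _ (oneline_injective σ), filter_filter]

theorem card_filter_onelineTail_lt_self (R : Fin k) :
    R.1 + 1 + #{x ∈ onelineTail σ (R.1 + 1) | x < (σ R).1 + 1} =
      (σ R).1 + 1 + mcount σ R := by
  have hbefore : #{i | i < R ∧ σ i < σ R} + mcount σ R = R := by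
    rw [mcount, ← card_union_of_disjoint (disjoint_filter.2 fun i _ h h' => h.2.asymm h'.2),
      ← filter_or, ← Fin.card_Iio R]
    congr 1
    ext i
    rcases lt_trichotomy (σ i) (σ R) with h | h | h <;> simp_all
  have hvalue : #{i | i < R ∧ σ i < σ R} + #{i | R < i ∧ σ i < σ R} = σ R := by
    rw [← card_union_of_disjoint (disjoint_filter.2 fun i _ h h' => h.1.asymm h'.1),
      ← filter_or, ← Fin.card_Iio (σ R)]
    refine card_equiv σ fun i => ?_
    rcases lt_trichotomy i R with h | h | h <;> simp_all
  have hafter :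
      #{x ∈ onelineTail σ (R.1 + 1) | x < (σ R).1 + 1} = #{i | R < i ∧ σ i < σ R} := by
    rw [card_filter_onelineTail_lt]
    congr 1
    ext i
    simp only [mem_filter, mem_univ, true_and, Fin.lt_def]
    omega
  omega

theorem card_filter_le_succ {ρ : ℕ} (hρ : ρ < k) (b : ℕ) :
    #{i : Fin k | i.1 + 1 ≤ ρ + 1 ∧ b < (σ i).1 + 1} =
      #{i : Fin k | i.1 + 1 ≤ ρ ∧ b < (σ i).1 + 1} +
        if b < (σ ⟨ρ, hρ⟩).1 + 1 then 1 else 0 := by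
  split_ifs with hb
  · rw [← card_insert_of_notMem (a := ⟨ρ, hρ⟩) (by simp)]
    congr 1
    ext i
    rcases eq_or_ne i ⟨ρ, hρ⟩ with rfl | hi
    · simpa using hb
    · have hi' : i.1 ≠ ρ := fun h => hi (Fin.ext h)
      simp only [mem_filter, mem_univ, true_and, mem_insert, hi, false_or]
      omega
  · rw [add_zero]
    congr 1
    ext i
    rcases eq_or_ne i ⟨ρ, hρ⟩ with rfl | hi
    · simpa using hb
    · have hi' : i.1 ≠ ρ := fun h => hi (Fin.ext h)
      simp only [mem_filter, mem_univ, true_and]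
      omega

theorem nuSeq_add_card_filter_lt {p : ℕ → ℕ}
    (hp : ∀ R : Fin k, p (R.1 + 1) = (σ R).1 + 1 + mcount σ R) {r : ℕ} (hr : r ≤ k) :
    ∀ b ∈ onelineTail σ r,
      nuSeq (fun _ => 0) p r (r + 1 + #{x ∈ onelineTail σ r | x < b}) =
        #{i : Fin k | i.1 + 1 ≤ r ∧ b < (σ i).1 + 1} := by
  induction r with
  | zero => intro b _; simp [nuSeq]
  | succ ρ ih =>
    intro b hb
    have hρ : ρ < k := hr
    set v := (σ ⟨ρ, hρ⟩).1 + 1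
    have hbv : b ≠ v := fun h => notMem_onelineTail_succ σ hρ (by rwa [h] at hb)
    have hpv : p (ρ + 1) = ρ + 1 + #{x ∈ onelineTail σ (ρ + 1) | x < v} :=
      (hp ⟨ρ, hρ⟩).trans (card_filter_onelineTail_lt_self σ ⟨ρ, hρ⟩).symm
    have hrank : #{x ∈ onelineTail σ ρ | x < b} =
        #{x ∈ onelineTail σ (ρ + 1) | x < b} + if v < b then 1 else 0 := by
      rw [onelineTail_eq_insert σ hρ, card_filter_lt_insert (notMem_onelineTail_succ σ hρ)]
    have hle_iff :
        ρ + 1 + 1 + #{x ∈ onelineTail σ (ρ + 1) | x < b} ≤ p (ρ + 1) ↔ b < v := by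
      rw [hpv, ← card_filter_lt_lt_iff hb]
      omega
    have ih_b := ih hρ.le b (by rw [onelineTail_eq_insert σ hρ]; exact mem_insert_of_mem hb)
    rw [card_filter_le_succ σ hρ, ← ih_b, hrank]
    show nuUpdate (nuSeq _ p ρ) (ρ + 1) (p (ρ + 1)) _ = _
    rw [nuUpdate]
    rcases hbv.lt_or_gt with h | h
    · rw [if_pos ⟨by omega, hle_iff.2 h⟩, if_neg h.asymm, if_pos h]
      congr 2
      omega
    · rw [if_neg fun hj => h.asymm (hle_iff.1 hj.2), if_pos h, if_neg h.asymm, add_zero]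
      congr 1
      omega

end Oneline

theorem nuSeq_count_general (k : ℕ) (μ : ℕ → ℤ) (σ : Equiv.Perm (Fin k))
    (γ : THC k μ (fun _ => 0))
    (hγ : ∀ r : Fin k, γ.p (r.1 + 1) = ((σ r : ℕ) + 1) + mcount σ r ∧
      γ.q (r.1 + 1) = 1 + mcount σ r)
    (r j : ℕ) (hrj : r < j) (hjk : j ≤ k) :
    nuSeq (fun _ => 0) γ.p r j =
      (Finset.univ.filter fun i : Fin k =>
        i.1 + 1 ≤ r ∧ beta σ r (j - r) < (σ i : ℕ) + 1).card := by
  obtain ⟨hmem, hrank⟩ := sort_getD_mem_and_card_filter_lt (S := onelineTail σ r)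
    (t := j - r - 1) (by rw [card_onelineTail]; omega)
  have h := nuSeq_add_card_filter_lt σ (fun R => (hγ R).1) (hrj.le.trans hjk) _ hmem
  rwa [hrank, show r + 1 + (j - r - 1) = j by omega] at h

/-- **Lemma (counting `ν^{(r)}_j`).** If `γ` is the tunnel hook covering of `D_μ`
corresponding to `σ ∈ S_k` (terminal cells `τ_r = (σ_r + m_r, 1 + m_r)`), then for
`0 ≤ r < k` and `r < j ≤ k`, `ν^{(r)}_j` equals the number of entries among
`σ_1, …, σ_r` greater than `β_{σ,r,j−r}`, the `(j−r)`-th smallest element of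
`{σ_{r+1}, …, σ_k}`. -/
theorem nuSeq_count (k : ℕ) (hk : 1 ≤ k) (μ : ℕ → ℤ) (σ : Equiv.Perm (Fin k))
    (γ : THC k μ (fun _ => 0))
    (hγ : ∀ r : Fin k, γ.p (r.1 + 1) = ((σ r : ℕ) + 1) + mcount σ r ∧
      γ.q (r.1 + 1) = 1 + mcount σ r)
    (r j : ℕ) (hrk : r < k) (hrj : r < j) (hjk : j ≤ k) :
    nuSeq (fun _ => 0) γ.p r j =
      (Finset.univ.filter fun i : Fin k =>
        i.1 + 1 ≤ r ∧ beta σ r (j - r) < (σ i : ℕ) + 1).card :=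
  nuSeq_count_general k μ σ γ hγ r j hrj hjk
end

section
/- Let μ ∈ ℤ^k and fix 1 ≤ m ≤ k. Then I_μ = Σ_{π ∈ A_{k,m}} ε(π) · ( H_{μ_1 − 1 + π_1} H_{μ_2 − 2 + π_2} ⋯ H_{μ_m − m + π_m} ) · I_{μ̃ / ν̃}, where: A_{k,m} is the set of injective maps (linear permutations) π : {1,…,m} → {1,…,k}; ε(π) = (−1)^δ with δ = #{ (i,j) : i < j ≤ m, π_i > π_j } + #{ (i,q) : i ≤ m, q ∈ {1,…,k} ∖ {π_1,…,π_m}, π_i > q }; μ̃ = (μ_{m+1},…,μ_k); and ν̃ ∈ (ℤ_{≥0})^{k−m} is given by ν̃_j = #{ i ≤ m : π_i > β_j }, with β_j the j-th smallest element of {1,…,k} ∖ {π_1,…,π_m}. -/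
open scoped BigOperators

/-!
A permutation `σ ∈ S_k` is the same as its first `m` values, a linear permutation `π ∈ A_{k,m}`,
together with a permutation `τ` of the remaining `k - m` positions, whose values are read through
the increasing enumeration `β` of the complement of the image of `π`. The inversions of `σ` are
those of `π`, the pairs of a value `π_i` and a smaller `β_q`, and those of `τ`, so
`sign σ = ε(π) sign τ`. In the term of `σ` in `I_μ` the first `m` factors form the prefactor of
`π` and the others form the term of `τ` in `I_{μ̃/ν̃}`: below `β_j` lie `j - 1` values of `β` and
`m - ν̃_j` values of `π`, so `β_j = m + j - ν̃_j`.
-/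

open Equiv Equiv.Perm Finset

theorem List.prod_ofFn_add {M : Type*} [Monoid M] {m n : ℕ} (f : Fin (m + n) → M) :
    (List.ofFn f).prod = (List.ofFn fun i => f (Fin.castAdd n i)).prod *
      (List.ofFn fun j => f (Fin.natAdd m j)).prod := by
  rw [List.ofFn_add, List.prod_append]
  rfl

def invCount {n : ℕ} {α : Type*} [LinearOrder α] (f : Fin n → α) : ℕ :=
  #{p : Fin n × Fin n | p.1 < p.2 ∧ f p.2 < f p.1}

theorem Equiv.Perm.sign_eq_neg_one_pow_invCount {n : ℕ} (σ : Perm (Fin n)) :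
    sign σ = (-1) ^ invCount σ := by
  have hpair : ∀ p : Fin n × Fin n, (if p.1 < p.2 then (if σ p.1 < σ p.2 then 1 else -1) else 1)
      = if p.1 < p.2 ∧ σ p.2 < σ p.1 then (-1 : ℤˣ) else 1 := by
    rintro ⟨i, j⟩
    have := σ.injective.ne_iff (x := i) (y := j)
    split_ifs <;> grind
  rw [sign_eq_prod_prod_Ioi, invCount, ← prod_const, prod_filter, ← Fintype.prod_congr _ _ hpair,
    Fintype.prod_prod_type]
  refine Fintype.prod_congr _ _ fun i => ?_
  rw [← prod_filter]
  congr 1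
  ext j; simp

theorem invCount_append {m n : ℕ} {α : Type*} [LinearOrder α] (f : Fin m → α) {g : Fin n → α}
    (hg : StrictMono g) :
    invCount (Fin.append f g) = invCount f + #{p : Fin m × Fin n | g p.2 < f p.1} := by
  have hcc (i j : Fin m) : Fin.castAdd n i < Fin.castAdd n j ↔ i < j := Iff.rfl
  have hcn (i : Fin m) (j : Fin n) : Fin.castAdd n i < Fin.natAdd m j := by
    simp only [Fin.lt_def, Fin.val_castAdd, Fin.val_natAdd]; omega
  have hnc (i : Fin n) (j : Fin m) : ¬ Fin.natAdd m i < Fin.castAdd n j := by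
    simp only [Fin.lt_def, Fin.val_castAdd, Fin.val_natAdd]; omega
  have hgg (i j : Fin n) : ¬ (Fin.natAdd m i < Fin.natAdd m j ∧ g j < g i) :=
    fun h => (hg ((Fin.natAdd_lt_natAdd_iff m).mp h.1)).asymm h.2
  simp only [invCount, card_filter, Fintype.sum_prod_type, Fin.sum_univ_add, Fin.append_left,
    Fin.append_right, hcc, hcn, hnc, hgg, true_and, false_and, if_false, sum_const_zero, add_zero,
    sum_add_distrib]

section Complement

variable {m n : ℕ} (π : Fin m ↪ Fin (m + n))

def complRange : Finset (Fin (m + n)) := {q | ∀ t, π t ≠ q}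

theorem card_complRange : #(complRange π) = n := by
  have : complRange π = (univ.map π)ᶜ := by ext q; simp [complRange]
  rw [this, card_compl, card_map]
  simp

-- `complEnum π j` is `β_{j+1} - 1` in the 1-based notation of `betaC` (see `betaC_succ`).
def complEnum : Fin n ↪o Fin (m + n) := (complRange π).orderEmbOfFin (card_complRange π)

theorem mem_range_complEnum {q : Fin (m + n)} : q ∈ Set.range (complEnum π) ↔ ∀ t, π t ≠ q := by
  simp [complEnum, range_orderEmbOfFin, complRange]

theorem ne_complEnum (t : Fin m) (j : Fin n) : π t ≠ complEnum π j :=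
  (mem_range_complEnum π).mp ⟨j, rfl⟩ t

noncomputable def complEquiv : Fin m ⊕ Fin n ≃ Fin (m + n) :=
  Equiv.ofBijective (Sum.elim π (complEnum π)) <|
    (Fintype.bijective_iff_injective_and_card _).mpr
      ⟨π.injective.sumElim (complEnum π).injective (ne_complEnum π), by simp⟩

theorem betaC_succ (j : Fin n) : betaC π (j + 1) = complEnum π j + 1 := by
  set T := (complRange π).image fun q : Fin (m + n) => q.1 + 1
  have hT : #T = n := by
    rw [card_image_of_injective _ fun a b h => Fin.ext (by simpa using h), card_complRange]
  have hunique : (fun j : Fin n => (complEnum π j : ℕ) + 1) = T.orderEmbOfFin hT :=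
    orderEmbOfFin_unique hT (fun j => mem_image_of_mem _ (orderEmbOfFin_mem _ _ j))
      fun a b h => by simpa using (complEnum π).strictMono h
  rw [congrFun hunique j, orderEmbOfFin_apply, betaC, Nat.add_sub_cancel,
    List.getD_eq_getElem _ _ (by rw [length_sort, ← complRange, hT]; exact j.2)]
  rfl

theorem card_lt_complEnum_add (j : Fin n) : #{t | π t < complEnum π j} + j = complEnum π j := by
  have hcount := (complEquiv π).sum_comp fun q => if q < complEnum π j then 1 else 0
  rw [Fintype.sum_sum_type] at hcount
  simp only [complEquiv, Equiv.ofBijective_apply, Sum.elim_inl, Sum.elim_inr,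
    (complEnum π).lt_iff_lt, ← card_filter, filter_gt_eq_Iio, Fin.card_Iio] at hcount
  exact hcount

theorem card_betaC_lt (j : Fin n) :
    (#{t | betaC π (j + 1) < (π t : ℕ) + 1} : ℤ) = m + j - complEnum π j := by
  have hsplit : #{t | π t < complEnum π j} + #{t | complEnum π j < π t} = m := by
    conv_rhs => rw [← Fintype.card_fin m, ← card_univ,
      ← card_filter_add_card_filter_not (p := (π · < complEnum π j))]
    congr 2
    ext t
    simp [lt_iff_le_and_ne, ne_complEnum π t j, ne_comm]
  have hlt := card_lt_complEnum_add π j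
  simp only [betaC_succ, add_lt_add_iff_right, ← Fin.lt_def]
  omega

end Complement

section ExtendPerm

variable {m n : ℕ} (π : Fin m ↪ Fin (m + n)) (τ : Perm (Fin n))

noncomputable def extendPerm : Perm (Fin (m + n)) :=
  (finSumFinEquiv.symm.trans (Perm.sumCongr 1 τ)).trans (complEquiv π)

@[simp]
theorem extendPerm_castAdd (i : Fin m) :
    extendPerm π τ (Fin.castAdd n i) = π i := by
  simp [extendPerm, complEquiv]

@[simp]
theorem extendPerm_natAdd (j : Fin n) :
    extendPerm π τ (Fin.natAdd m j) = complEnum π (τ j) := by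
  simp [extendPerm, complEquiv]

theorem extendPerm_bijective :
    Function.Bijective fun p : (Fin m ↪ Fin (m + n)) × Perm (Fin n) => extendPerm p.1 p.2 := by
  rw [Fintype.bijective_iff_injective_and_card]
  refine ⟨?_, ?_⟩
  · rintro ⟨π, τ⟩ ⟨π', τ'⟩ h
    obtain rfl : π = π' := DFunLike.ext _ _ fun i => by simpa using congr($h (Fin.castAdd n i))
    obtain rfl : τ = τ' := Equiv.ext fun j => by simpa using congr($h (Fin.natAdd m j))
    rfl
  · simp only [Fintype.card_prod, Fintype.card_embedding_eq, Fintype.card_perm, Fintype.card_fin]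
    rw [mul_comm, ← Nat.factorial_mul_descFactorial (Nat.le_add_right m n),
      Nat.add_sub_cancel_left]

theorem lpInv_eq_invCount_add :
    lpInv π = invCount π + #{p : Fin m × Fin n | complEnum π p.2 < π p.1} := by
  rw [lpInv]
  congr 1
  refine (card_bij (fun p _ => (p.1, complEnum π p.2)) ?_ ?_ ?_).symm
  · intro p hp
    simp only [mem_filter, mem_univ, true_and] at hp ⊢
    exact ⟨fun t => ne_complEnum π t p.2, hp⟩
  · intro p _ q _ h
    simp only [Prod.mk.injEq, (complEnum π).injective.eq_iff] at h
    exact Prod.ext h.1 h.2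
  · rintro ⟨i, q⟩ hq
    simp only [mem_filter, mem_univ, true_and] at hq
    obtain ⟨j, rfl⟩ := (mem_range_complEnum π).mpr hq.1
    exact ⟨(i, j), by simpa using hq.2, rfl⟩

theorem sign_extendPerm :
    sign (extendPerm π τ) = (-1) ^ lpInv π * sign τ := by
  have hfactor :
      extendPerm π τ = (finSumFinEquiv.permCongr (Perm.sumCongr 1 τ)).trans (extendPerm π 1) := by
    ext x
    simp [extendPerm, permCongr]
  have happend : ⇑(extendPerm π 1) = Fin.append π (complEnum π) := by
    ext x
    refine Fin.addCases (fun i => ?_) (fun j => ?_) x <;> simp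
  rw [hfactor, sign_trans, sign_eq_neg_one_pow_invCount (extendPerm π 1), happend,
    invCount_append _ (complEnum π).strictMono, ← lpInv_eq_invCount_add, sign_permCongr,
    sign_sumCongr, Perm.sign_one, one_mul]

end ExtendPerm

theorem immaculate_eq_sum_skew_general (k m : ℕ) (hmk : m ≤ k) (μ : ℕ → ℤ) :
    Imm k μ = ∑ π : Fin m ↪ Fin k,
      (-1 : NSym) ^ lpInv π *
        (List.ofFn fun i : Fin m =>
          H (μ (i.1 + 1) - ((i.1 : ℤ) + 1) + (((π i : ℕ) : ℤ) + 1))).prod *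
        ImmSkew (k - m) (fun i => μ (m + i))
          (fun j => ((Finset.univ.filter fun t : Fin m =>
            betaC π j < (π t : ℕ) + 1).card : ℤ)) := by
  obtain ⟨n, rfl⟩ := Nat.exists_eq_add_of_le hmk
  rw [Nat.add_sub_cancel_left, Imm, ndet, ← extendPerm_bijective.sum_comp, Fintype.sum_prod_type]
  refine sum_congr rfl fun π _ => ?_
  rw [ImmSkew, ndet, mul_sum]
  refine sum_congr rfl fun τ _ => ?_
  rw [sign_extendPerm, List.prod_ofFn_add, Units.val_mul, mul_smul, ← mul_smul_comm,
    ← smul_mul_assoc, Units.val_pow_eq_pow_val, zsmul_eq_mul]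
  simp only [extendPerm_castAdd, extendPerm_natAdd, card_betaC_lt, Fin.val_castAdd, Fin.val_natAdd]
  push_cast
  congr 4 <;> funext i <;> congr 1
  · ring
  · rw [Nat.add_assoc]
    ring

/-- **Corollary (expansion into skew immaculates).** For `μ ∈ ℤ^k` and `1 ≤ m ≤ k`,
`I_μ = Σ_{π ∈ A_{k,m}} ε(π) H_{μ_1−1+π_1} ⋯ H_{μ_m−m+π_m} · I_{μ̃/ν̃}`, the sum over
all linear permutations (injections) `π : {1,…,m} → {1,…,k}`, where `ε(π) = (−1)^δ`
with `δ` as in `lpInv`, `μ̃ = (μ_{m+1},…,μ_k)`, and `ν̃_j = #{ i ≤ m : π_i > β_j }`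
with `β_j` the `j`-th smallest element of `{1,…,k} ∖ {π_1,…,π_m}`. -/
theorem immaculate_eq_sum_skew (k m : ℕ) (hm1 : 1 ≤ m) (hmk : m ≤ k) (μ : ℕ → ℤ) :
    Imm k μ = ∑ π : Fin m ↪ Fin k,
      (-1 : NSym) ^ lpInv π *
        (List.ofFn fun i : Fin m =>
          H (μ (i.1 + 1) - ((i.1 : ℤ) + 1) + (((π i : ℕ) : ℤ) + 1))).prod *
        ImmSkew (k - m) (fun i => μ (m + i))
          (fun j => ((Finset.univ.filter fun t : Fin m =>
            betaC π j < (π t : ℕ) + 1).card : ℤ)) :=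
  immaculate_eq_sum_skew_general k m hmk μ
end

section
/- Let Δ = (Δ_1, …, Δ_ℓ) be a weak composition (a finite sequence of nonnegative integers) with Δ_1 > 0, and let Δ' be any coarsening of the flattening fl(Δ). Then there is exactly one allowable flat coarsening subset S ⊆ {1,…,ℓ−1} for Δ such that Θ(Δ,S) = Δ'. -/
open scoped BigOperators

/-! Every zero part of `Δ` after the first has to be merged into its predecessor, and once it
is, `Θ(Δ, S)` is the coarsening of `fl(Δ)` at the remaining commas of `S`. Conversely, merging a
positive part into the current one strictly increases it, so `Θ(Δ, S)` determines, comma by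
comma, which of the commas before positive parts lie in `S`. -/

section Coarsening

variable {α : Type} [Add α]

lemma theta_singleton (S : Finset ℕ) (i : ℕ) (a : α) : theta S i [a] = [a] := by
  rw [theta]

lemma theta_cons_cons (S : Finset ℕ) (i : ℕ) (a b : α) (l : List α) :
    theta S i (a :: b :: l) =
      if i ∈ S then theta S (i + 1) ((a + b) :: l) else a :: theta S (i + 1) (b :: l) := by
  rw [theta]

lemma theta_congr {S T : Finset ℕ} {i : ℕ} (h : ∀ j, i ≤ j → (j ∈ S ↔ j ∈ T)) (a : α)
    (l : List α) : theta S i (a :: l) = theta T i (a :: l) := by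
  induction l generalizing a i with
  | nil => simp only [theta_singleton]
  | cons b l ih =>
    have h' : ∀ j, i + 1 ≤ j → (j ∈ S ↔ j ∈ T) := fun j hj => h j (by omega)
    simp only [theta_cons_cons, h i le_rfl, ih h']

lemma theta_insert_of_lt {S : Finset ℕ} {i j : ℕ} (hji : j < i) (a : α) (l : List α) :
    theta (insert j S) i (a :: l) = theta S i (a :: l) :=
  theta_congr (fun k hik => by simp [Finset.mem_insert, (hji.trans_le hik).ne']) a l

end Coarsening

lemma le_headD_theta (S : Finset ℕ) (i a : ℕ) (l : List ℕ) :
    a ≤ (theta S i (a :: l)).headD 0 := by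
  induction l generalizing a i with
  | nil => simp [theta_singleton]
  | cons b l ih =>
    rw [theta_cons_cons]
    split_ifs
    · exact (Nat.le_add_right a b).trans (ih _ _)
    · simp

/-- The parts of `l` follow the commas `i, i + 1, …`; `S` merges every zero part of `l`
into its predecessor. -/
def MergesZeros (S : Finset ℕ) (i : ℕ) (l : List ℕ) : Prop :=
  ∀ k, l.getD k 1 = 0 → i + k ∈ S

lemma mergesZeros_nil (S : Finset ℕ) (i : ℕ) : MergesZeros S i [] := by
  intro k hk
  simp at hk

lemma mergesZeros_cons {S : Finset ℕ} {i c : ℕ} {l : List ℕ} :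
    MergesZeros S i (c :: l) ↔ (c = 0 → i ∈ S) ∧ MergesZeros S (i + 1) l := by
  constructor
  · intro h
    refine ⟨fun hc => by simpa using h 0 (by simpa using hc), fun k hk => ?_⟩
    simpa [add_assoc, add_comm 1 k] using h (k + 1) (by simpa using hk)
  · rintro ⟨h0, h⟩ (_ | k) hk
    · simpa using h0 (by simpa using hk)
    · simpa [add_assoc, add_comm 1 k] using h k (by simpa using hk)

lemma MergesZeros.mono {S T : Finset ℕ} {i : ℕ} {l : List ℕ} (h : MergesZeros S i l)
    (hST : S ⊆ T) : MergesZeros T i l :=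
  fun k hk => hST (h k hk)

lemma mergesZeros_one_iff {S : Finset ℕ} {a : ℕ} {l : List ℕ} :
    MergesZeros S 1 l ↔
      ∀ i, 2 ≤ i → i ≤ (a :: l).length → (a :: l).getD (i - 1) 1 = 0 → i - 1 ∈ S := by
  constructor
  · intro h i hi _ hz
    obtain ⟨k, rfl⟩ := Nat.exists_eq_add_of_le' hi
    simpa [add_comm 1 k] using h k (by simpa using hz)
  · intro h k hk
    have hkl : k < l.length := by
      by_contra hkl
      rw [List.getD_eq_default _ _ (not_lt.mp hkl)] at hk
      exact one_ne_zero hk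
    simpa [add_comm 1 k] using h (k + 2) (by omega) (by simp; omega) (by simpa using hk)

theorem exists_mergesZeros_theta_eq_theta_filter (S' : Finset ℕ) (j a : ℕ) (l : List ℕ)
    (i : ℕ) :
    ∃ S ⊆ Finset.Icc i (i + l.length - 1), MergesZeros S i l ∧
      theta S i (a :: l) = theta S' j (a :: l.filter (· ≠ 0)) := by
  induction l generalizing a i j with
  | nil => exact ⟨∅, Finset.empty_subset _, mergesZeros_nil _ _, by simp [theta_singleton]⟩
  | cons c l ih =>
    have merge : ∀ j', (∃ S ⊆ Finset.Icc (i + 1) (i + 1 + l.length - 1),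
        MergesZeros S (i + 1) l ∧
          theta S (i + 1) ((a + c) :: l) = theta S' j' ((a + c) :: l.filter (· ≠ 0))) →
        ∃ S ⊆ Finset.Icc i (i + (c :: l).length - 1), MergesZeros S i (c :: l) ∧
          theta S i (a :: c :: l) = theta S' j' ((a + c) :: l.filter (· ≠ 0)) := by
      rintro j' ⟨S, hsub, hS, hθ⟩
      refine ⟨insert i S, ?_, mergesZeros_cons.2 ⟨fun _ => Finset.mem_insert_self i S,
        hS.mono (Finset.subset_insert i S)⟩, ?_⟩
      · exact Finset.insert_subset (by simp)
          (hsub.trans (Finset.Icc_subset_Icc (by omega) (by simp)))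
      · rw [theta_cons_cons, if_pos (Finset.mem_insert_self i S), theta_insert_of_lt
          (Nat.lt_succ_self i), hθ]
    by_cases hc : c = 0
    · subst hc
      simpa using merge j (by simpa using ih j a (i + 1))
    rw [List.filter_cons_of_pos (by simpa using hc), theta_cons_cons]
    by_cases hj : j ∈ S'
    · simpa [hj] using merge (j + 1) (ih (j + 1) (a + c) (i + 1))
    · obtain ⟨S, hsub, hS, hθ⟩ := ih (j + 1) c (i + 1)
      have hi : i ∉ S := fun hi => by simpa using hsub hi
      refine ⟨S, hsub.trans (Finset.Icc_subset_Icc (by omega) (by simp)),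
        mergesZeros_cons.2 ⟨fun h => absurd h hc, hS⟩, ?_⟩
      rw [theta_cons_cons, if_neg hi, if_neg hj, hθ]

theorem mem_iff_mem_of_theta_eq {S T : Finset ℕ} {i a : ℕ} {l : List ℕ}
    (hS : MergesZeros S i l) (hT : MergesZeros T i l)
    (h : theta S i (a :: l) = theta T i (a :: l)) :
    ∀ j, i ≤ j → j < i + l.length → (j ∈ S ↔ j ∈ T) := by
  induction l generalizing a i with
  | nil => intro j hij hj; simp at hj; omega
  | cons c l ih =>
    rw [mergesZeros_cons] at hS hT
    rw [theta_cons_cons, theta_cons_cons] at h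
    have merged_ne_kept (U V : Finset ℕ) (hc : c ≠ 0)
        (h' : theta U (i + 1) ((a + c) :: l) = a :: theta V (i + 1) (c :: l)) : False := by
      have := le_headD_theta U (i + 1) (a + c) l
      rw [h'] at this
      simp at this
      omega
    have hi : i ∈ S ↔ i ∈ T := by
      by_cases hc : c = 0
      · exact iff_of_true (hS.1 hc) (hT.1 hc)
      by_cases hiS : i ∈ S <;> by_cases hiT : i ∈ T <;> simp only [hiS, hiT, if_true,
        if_false] at h ⊢
      · exact (merged_ne_kept S T hc h).elim
      · exact (merged_ne_kept T S hc h.symm).elim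
    have htail : ∀ j, i + 1 ≤ j → j < i + 1 + l.length → (j ∈ S ↔ j ∈ T) := by
      by_cases hiS : i ∈ S
      · rw [if_pos hiS, if_pos (hi.mp hiS)] at h
        exact ih hS.2 hT.2 h
      · rw [if_neg hiS, if_neg (hi.not.mp hiS), List.cons.injEq] at h
        exact ih hS.2 hT.2 h.2
    intro j hij hj
    rcases hij.eq_or_lt with rfl | hij
    · exact hi
    · exact htail j hij (by simp at hj; omega)

/-- **Lemma (unique allowable flat coarsening subset).** Let `Δ` be a weak composition
with `Δ_1 > 0` and let `Δ'` be any coarsening of the flattening `fl(Δ)` (the strong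
composition obtained by deleting the zero parts of `Δ`).  Then there is exactly one
allowable flat coarsening subset `S ⊆ {1,…,ℓ−1}` for `Δ` (i.e. a subset containing
`i − 1` whenever `Δ_i = 0`) such that `Θ(Δ,S) = Δ'`. -/
theorem unique_allowable_flat_coarsening (Δ : List ℕ) (hne : Δ ≠ [])
    (h1 : 0 < Δ.head hne) (Δ' : List ℕ)
    (hc : ∃ S' : Finset ℕ,
      S' ⊆ Finset.Icc 1 ((Δ.filter fun x => x ≠ 0).length - 1) ∧
      theta S' 1 (Δ.filter fun x => x ≠ 0) = Δ') :
    ∃! S : Finset ℕ,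
      S ⊆ Finset.Icc 1 (Δ.length - 1) ∧
      (∀ i, 2 ≤ i → i ≤ Δ.length → Δ.getD (i - 1) 1 = 0 → i - 1 ∈ S) ∧
      theta S 1 Δ = Δ' := by
  obtain ⟨a, l, rfl⟩ := List.exists_cons_of_ne_nil hne
  have ha : a ≠ 0 := Nat.pos_iff_ne_zero.mp h1
  obtain ⟨S', -, rfl⟩ := hc
  rw [List.filter_cons_of_pos (by simpa using ha)]
  obtain ⟨S, hSsub, hS, hθ⟩ := exists_mergesZeros_theta_eq_theta_filter S' 1 a l 1
  refine ⟨S, ⟨by simpa using hSsub, mergesZeros_one_iff.mp hS, hθ⟩, ?_⟩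
  rintro T ⟨hTsub, hT, hTθ⟩
  ext j
  by_cases hj : j ∈ Finset.Icc 1 l.length
  · rw [Finset.mem_Icc] at hj
    exact mem_iff_mem_of_theta_eq (mergesZeros_one_iff.mpr hT) hS (hTθ.trans hθ.symm) j hj.1
      (by omega)
  · simp only [List.length_cons, Nat.add_sub_cancel] at hTsub
    exact iff_of_false (fun h => hj (hTsub h)) (fun h => hj (by simpa using hSsub h))
end

section
/- Let μ be a composition and let γ be a tunnel hook covering of D_μ with terminal cells (τ_1, …, τ_k), τ_j = (p_j, q_j). Fix 1 ≤ i < k and let f_i(γ) be the tunnel hook covering of D_μ whose associated permutation is obtained from σ(γ) by interchanging its i-th and (i+1)-th entries. Then the terminal cells of f_i(γ) are (τ_1, …, τ_{i−1}, τ_{i+1}, (p_i + 1, q_i + 1), τ_{i+2}, …, τ_k) if p_i − q_i < p_{i+1} − q_{i+1}, and (τ_1, …, τ_{i−1}, (p_{i+1} − 1, q_{i+1} − 1), τ_i, τ_{i+2}, …, τ_k) if p_i − q_i > p_{i+1} − q_{i+1}. -/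
open scoped BigOperators

lemma nuSeq_succ (ν₀ : ℕ → ℕ) (p : ℕ → ℕ) (r : ℕ) :
    nuSeq ν₀ p (r + 1) = nuUpdate (nuSeq ν₀ p r) (r + 1) (p (r + 1)) := rfl

lemma nuUpdate_pos {ν : ℕ → ℕ} {r p j : ℕ} (h1 : r < j) (h2 : j ≤ p) :
    nuUpdate ν r p j = ν (j - 1) + 1 := if_pos ⟨h1, h2⟩

lemma nuUpdate_neg {ν : ℕ → ℕ} {r p j : ℕ} (h : ¬(r < j ∧ j ≤ p)) :
    nuUpdate ν r p j = ν j := if_neg h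

lemma decFrom_anti {k r : ℕ} {ν : ℕ → ℕ} (h : DecFrom k r ν) (a b : ℕ)
    (ha : r ≤ a) (hab : a ≤ b) : b ≤ k → ν b ≤ ν a := by
  induction b, hab using Nat.le_induction with
  | base => exact fun _ => le_rfl
  | succ b hb ih =>
    exact fun hbk => (h b (ha.trans hb) (by omega)).trans (ih (by omega))

lemma dec_update {k r p : ℕ} {ν : ℕ → ℕ} (h : DecFrom k r ν) (hrp : r ≤ p) :
    DecFrom k (r + 1) (nuUpdate ν r p) := by
  intro j hj hjk
  have e : j - 1 + 1 = j := by omega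
  have h1 := h (j - 1) (by omega) (by omega)
  rw [e] at h1
  have h2 := h j (by omega) hjk
  unfold nuUpdate
  simp only [Nat.add_sub_cancel]
  split_ifs <;> omega

lemma tunnel_mk (k r p : ℕ) (μ : ℕ → ℤ) {ν : ℕ → ℕ} (h : DecFrom k r ν)
    (h1 : r ≤ p) (h2 : p ≤ k) : IsTunnel k r μ ν p (ν p + 1) := by
  refine ⟨⟨h1, h2, ?_⟩, rfl⟩
  split_ifs with hpr
  · subst hpr
    refine ⟨le_rfl, ?_⟩
    have e : ((ν p + 1 : ℕ) : ℤ) = (ν p : ℤ) + 1 := by push_cast; ring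
    rw [e]
    exact le_max_left _ _
  · refine ⟨le_rfl, ?_⟩
    have e : p - 1 + 1 = p := by omega
    have h3 := h (p - 1) (by omega) (by omega)
    rw [e] at h3
    omega

lemma tunnel_unique {k r : ℕ} {μ : ℕ → ℤ} {ν : ℕ → ℕ} (h : DecFrom k r ν)
    {p q p' q' : ℕ} (ht : IsTunnel k r μ ν p q) (ht' : IsTunnel k r μ ν p' q')
    (he : p + q' = p' + q) : p = p' ∧ q = q' := by
  have hq := ht.2
  have hq' := ht'.2
  rcases lt_trichotomy p p' with hlt | heq | hgt
  · have := decFrom_anti h p p' ht.1.1 hlt.le ht'.1.2.1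
    omega
  · omega
  · have := decFrom_anti h p' p ht'.1.1 hgt.le ht.1.2.1
    omega

lemma decAll {k : ℕ} {μ : ℕ → ℤ} (γ : THC k μ (fun _ => 0)) :
    ∀ r, r ≤ k → DecFrom k (r + 1) (nuSeq (fun _ => 0) γ.p r) := by
  intro r
  induction r with
  | zero => exact fun _ _ _ _ => le_rfl
  | succ n ih =>
    intro hk
    have ht := γ.tunnel (n + 1) (by omega) hk
    rw [nuSeq_succ]
    exact dec_update (ih (by omega)) ht.1.1

lemma step_lemma {k : ℕ} {μ : ℕ → ℤ} {r : ℕ}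
    {ν ν' : ℕ → ℕ} {p q p' q' : ℕ}
    (hdec' : DecFrom k r ν')
    (hag : ∀ j, r ≤ j → ν j = ν' j)
    (ht : IsTunnel k r μ ν p q)
    (ht' : IsTunnel k r μ ν' p' q')
    (heq : p' + q = p + q') :
    p' = p ∧ q' = q ∧ ∀ j, r + 1 ≤ j → nuUpdate ν r p j = nuUpdate ν' r p' j := by
  have hp1 := ht.1.1
  have hp2 := ht.1.2.1
  have hq : q = ν' p + 1 := by rw [ht.2, hag p hp1]
  have htgt : IsTunnel k r μ ν' p q := by
    rw [hq]; exact tunnel_mk k r p μ hdec' hp1 hp2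
  obtain ⟨hpp, hqq⟩ := tunnel_unique hdec' ht' htgt heq
  subst hpp
  refine ⟨rfl, hqq, fun j hj => ?_⟩
  have e1 := hag (j - 1) (by omega)
  have e2 := hag j (by omega)
  unfold nuUpdate
  split_ifs <;> omega

lemma agreeA {ν ν' : ℕ → ℕ} {i a b : ℕ} (hag : ∀ j, i ≤ j → ν j = ν' j)
    (hia : i ≤ a) (hab : a < b) :
    ∀ j, i + 2 ≤ j →
      nuUpdate (nuUpdate ν i a) (i + 1) b j =
        nuUpdate (nuUpdate ν' i b) (i + 1) (a + 1) j := by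
  intro j hj
  have e1 := hag (j - 1 - 1) (by omega)
  have e2 := hag (j - 1) (by omega)
  have e3 := hag j (by omega)
  unfold nuUpdate
  split_ifs <;> omega

lemma agreeB {ν ν' : ℕ → ℕ} {i a b : ℕ} (hag : ∀ j, i ≤ j → ν j = ν' j)
    (hb : i + 1 ≤ b) (hba : b ≤ a) :
    ∀ j, i + 2 ≤ j →
      nuUpdate (nuUpdate ν i a) (i + 1) b j =
        nuUpdate (nuUpdate ν' i (b - 1)) (i + 1) a j := by
  intro j hj
  have e1 := hag (j - 1 - 1) (by omega)
  have e2 := hag (j - 1) (by omega)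
  have e3 := hag j (by omega)
  unfold nuUpdate
  split_ifs <;> omega

lemma tail_agree {k : ℕ} {μ : ℕ → ℤ} (γ γ' : THC k μ (fun _ => 0)) (i0 K : ℕ)
    (hK : K ≤ k)
    (hbase : ∀ j, i0 + 1 ≤ j →
      nuSeq (fun _ => 0) γ.p i0 j = nuSeq (fun _ => 0) γ'.p i0 j)
    (hout' : ∀ r, i0 + 1 ≤ r → r ≤ K → γ'.p r + γ.q r = γ.p r + γ'.q r) :
    ∀ r, i0 ≤ r → r ≤ K →
      (∀ j, r + 1 ≤ j →
        nuSeq (fun _ => 0) γ.p r j = nuSeq (fun _ => 0) γ'.p r j) ∧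
      ∀ s, i0 + 1 ≤ s → s ≤ r → γ'.p s = γ.p s ∧ γ'.q s = γ.q s := by
  intro r hr
  induction r, hr using Nat.le_induction with
  | base =>
    exact fun _ => ⟨hbase, fun s hs1 hs2 => ((by omega : ¬ (i0 + 1 ≤ i0)) (hs1.trans hs2)).elim⟩
  | succ n hn ih =>
    intro hnk
    obtain ⟨hag, hid⟩ := ih (by omega)
    have ht := γ.tunnel (n + 1) (by omega) (by omega)
    have ht' := γ'.tunnel (n + 1) (by omega) (by omega)
    simp only [Nat.add_sub_cancel] at ht ht'
    obtain ⟨hp, hq, hag'⟩ :=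
      step_lemma (decAll γ' n (by omega)) hag ht ht' (hout' (n + 1) (by omega) (by omega))
    refine ⟨?_, fun s hs1 hs2 => ?_⟩
    · intro j hj
      rw [nuSeq_succ, nuSeq_succ]
      exact hag' j hj
    · rcases Nat.lt_or_ge s (n + 1) with hc | hc
      · exact hid s hs1 (by omega)
      · have hs : s = n + 1 := by omega
        subst hs; exact ⟨hp, hq⟩

/-- **Proposition (adjacent swap of tunnel hook coverings).** Let `μ` be a composition,
`γ` a tunnel hook covering of `D_μ` with terminal cells `τ_j = (p_j, q_j)`, and `γ'`
the tunnel hook covering whose associated permutation is obtained from that of `γ` by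
interchanging the `i`-th and `(i+1)`-th one-line entries (expressed additively below,
since `σ(γ)_r = p_r − q_r + 1`).  Then the terminal cells of `γ'` are
`(τ_1,…,τ_{i−1}, τ_{i+1}, (p_i+1,q_i+1), τ_{i+2},…,τ_k)` if `p_i − q_i < p_{i+1} − q_{i+1}`,
and `(τ_1,…,τ_{i−1}, (p_{i+1}−1,q_{i+1}−1), τ_i, τ_{i+2},…,τ_k)` if
`p_i − q_i > p_{i+1} − q_{i+1}`. -/
theorem thc_adjacent_swap (k : ℕ) (hk : 1 ≤ k) (μ : ℕ → ℤ)
    (hμ : ∀ r, 1 ≤ r → r ≤ k → 0 < μ r)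
    (γ γ' : THC k μ (fun _ => 0)) (i : ℕ) (hi1 : 1 ≤ i) (hik : i < k)
    (hout : ∀ r, 1 ≤ r → r ≤ k → r ≠ i → r ≠ i + 1 →
      γ'.p r + γ.q r = γ.p r + γ'.q r)
    (hsw₁ : γ'.p i + γ.q (i + 1) = γ.p (i + 1) + γ'.q i)
    (hsw₂ : γ'.p (i + 1) + γ.q i = γ.p i + γ'.q (i + 1)) :
    (γ.p i + γ.q (i + 1) < γ.p (i + 1) + γ.q i →
      (∀ r, 1 ≤ r → r ≤ k → r ≠ i → r ≠ i + 1 → γ'.p r = γ.p r ∧ γ'.q r = γ.q r) ∧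
      γ'.p i = γ.p (i + 1) ∧ γ'.q i = γ.q (i + 1) ∧
      γ'.p (i + 1) = γ.p i + 1 ∧ γ'.q (i + 1) = γ.q i + 1) ∧
    (γ.p (i + 1) + γ.q i < γ.p i + γ.q (i + 1) →
      (∀ r, 1 ≤ r → r ≤ k → r ≠ i → r ≠ i + 1 → γ'.p r = γ.p r ∧ γ'.q r = γ.q r) ∧
      γ'.p i + 1 = γ.p (i + 1) ∧ γ'.q i + 1 = γ.q (i + 1) ∧
      γ'.p (i + 1) = γ.p i ∧ γ'.q (i + 1) = γ.q i) := by
  obtain ⟨m, rfl⟩ : ∃ m, i = m + 1 := ⟨i - 1, by omega⟩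
  have dec := decAll γ
  have dec' := decAll γ'
  have block1 := tail_agree γ γ' 0 m (by omega) (fun j _ => rfl)
    (fun r hr1 hrm => hout r hr1 (by omega) (by omega) (by omega)) m (by omega) le_rfl
  have hagm : ∀ j, m + 1 ≤ j →
      nuSeq (fun _ => 0) γ.p m j = nuSeq (fun _ => 0) γ'.p m j := block1.1
  -- γ's tunnel data at steps i and i+1
  have hti := γ.tunnel (m + 1) (by omega) (by omega)
  have hti1 := γ.tunnel (m + 1 + 1) (by omega) (by omega)
  have ht'i := γ'.tunnel (m + 1) (by omega) (by omega)
  have ht'i1 := γ'.tunnel (m + 1 + 1) (by omega) (by omega)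
  simp only [Nat.add_sub_cancel] at hti hti1 ht'i ht'i1
  have hpi_lb : m + 1 ≤ γ.p (m + 1) := hti.1.1
  have hpi_ub : γ.p (m + 1) ≤ k := hti.1.2.1
  have hqi : γ.q (m + 1) = nuSeq (fun _ => 0) γ.p m (γ.p (m + 1)) + 1 := hti.2
  have hpi1_lb : m + 1 + 1 ≤ γ.p (m + 1 + 1) := hti1.1.1
  have hpi1_ub : γ.p (m + 1 + 1) ≤ k := hti1.1.2.1
  have hqi1 : γ.q (m + 1 + 1) =
      nuSeq (fun _ => 0) γ.p (m + 1) (γ.p (m + 1 + 1)) + 1 := hti1.2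
  rw [nuSeq_succ] at hqi1
  constructor
  · -- Case A : p_i - q_i < p_{i+1} - q_{i+1}
    intro hA
    have hlt : γ.p (m + 1) < γ.p (m + 1 + 1) := by
      by_contra hc
      push_neg at hc
      rw [nuUpdate_pos (by omega) hc] at hqi1
      have anti := decFrom_anti (dec m (by omega)) (γ.p (m + 1 + 1) - 1) (γ.p (m + 1))
        (by omega) (by omega) (by omega)
      omega
    rw [nuUpdate_neg (by omega)] at hqi1
    -- identify step i of γ'
    have hqtar : γ.q (m + 1 + 1) =
        nuSeq (fun _ => 0) γ'.p m (γ.p (m + 1 + 1)) + 1 := by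
      have e := hagm (γ.p (m + 1 + 1)) (by omega)
      omega
    have htgt : IsTunnel k (m + 1) μ (nuSeq (fun _ => 0) γ'.p m)
        (γ.p (m + 1 + 1)) (γ.q (m + 1 + 1)) := by
      rw [hqtar]
      exact tunnel_mk _ _ _ _ (dec' m (by omega)) (by omega) hpi1_ub
    obtain ⟨hPI, hQI⟩ := tunnel_unique (dec' m (by omega)) ht'i htgt hsw₁
    -- identify step i+1 of γ'
    have hval : nuSeq (fun _ => 0) γ'.p (m + 1) (γ.p (m + 1) + 1) = γ.q (m + 1) := by
      rw [nuSeq_succ, hPI, nuUpdate_pos (by omega) (by omega), Nat.add_sub_cancel]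
      have e := hagm (γ.p (m + 1)) (by omega)
      omega
    have htgt1 : IsTunnel k (m + 1 + 1) μ (nuSeq (fun _ => 0) γ'.p (m + 1))
        (γ.p (m + 1) + 1) (γ.q (m + 1) + 1) := by
      have t := tunnel_mk k (m + 1 + 1) (γ.p (m + 1) + 1) μ (dec' (m + 1) (by omega))
        (by omega) (by omega)
      rw [hval] at t
      exact t
    obtain ⟨hPI1, hQI1⟩ := tunnel_unique (dec' (m + 1) (by omega)) ht'i1 htgt1 (by omega)
    -- agreement at level i+1
    have hbase : ∀ j, m + 1 + 1 + 1 ≤ j →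
        nuSeq (fun _ => 0) γ.p (m + 1 + 1) j = nuSeq (fun _ => 0) γ'.p (m + 1 + 1) j := by
      intro j hj
      rw [nuSeq_succ, nuSeq_succ, nuSeq_succ, nuSeq_succ, hPI, hPI1]
      exact agreeA hagm hpi_lb hlt j (by omega)
    have block3 := tail_agree γ γ' (m + 1 + 1) k le_rfl hbase
      (fun r hr1 hrk => hout r (by omega) hrk (by omega) (by omega)) k (by omega) le_rfl
    refine ⟨fun r hr1 hrk hne1 hne2 => ?_, hPI, hQI, hPI1, hQI1⟩
    rcases Nat.lt_or_ge r (m + 1) with hc | hc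
    · exact block1.2 r hr1 (by omega)
    · exact block3.2 r (by omega) hrk
  · -- Case B : p_i - q_i > p_{i+1} - q_{i+1}
    intro hB
    have hle : γ.p (m + 1 + 1) ≤ γ.p (m + 1) := by
      by_contra hc
      push_neg at hc
      rw [nuUpdate_neg (by omega)] at hqi1
      have anti := decFrom_anti (dec m (by omega)) (γ.p (m + 1)) (γ.p (m + 1 + 1))
        (by omega) (by omega) (by omega)
      omega
    rw [nuUpdate_pos (by omega) hle] at hqi1
    -- identify step i of γ'
    have htgt : IsTunnel k (m + 1) μ (nuSeq (fun _ => 0) γ'.p m)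
        (γ.p (m + 1 + 1) - 1)
        (nuSeq (fun _ => 0) γ'.p m (γ.p (m + 1 + 1) - 1) + 1) :=
      tunnel_mk _ _ _ _ (dec' m (by omega)) (by omega) (by omega)
    have hrel : γ.q (m + 1 + 1) =
        nuSeq (fun _ => 0) γ'.p m (γ.p (m + 1 + 1) - 1) + 2 := by
      have e := hagm (γ.p (m + 1 + 1) - 1) (by omega)
      omega
    obtain ⟨hPI, hQI⟩ := tunnel_unique (dec' m (by omega)) ht'i htgt (by omega)
    -- identify step i+1 of γ'
    have hval : nuSeq (fun _ => 0) γ'.p (m + 1) (γ.p (m + 1)) + 1 = γ.q (m + 1) := by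
      rw [nuSeq_succ, hPI, nuUpdate_neg (by omega)]
      have e := hagm (γ.p (m + 1)) (by omega)
      omega
    have htgt1 : IsTunnel k (m + 1 + 1) μ (nuSeq (fun _ => 0) γ'.p (m + 1))
        (γ.p (m + 1)) (γ.q (m + 1)) := by
      have t := tunnel_mk k (m + 1 + 1) (γ.p (m + 1)) μ (dec' (m + 1) (by omega))
        (by omega) (by omega)
      rw [hval] at t
      exact t
    obtain ⟨hPI1, hQI1⟩ := tunnel_unique (dec' (m + 1) (by omega)) ht'i1 htgt1 hsw₂
    -- agreement at level i+1
    have hbase : ∀ j, m + 1 + 1 + 1 ≤ j →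
        nuSeq (fun _ => 0) γ.p (m + 1 + 1) j = nuSeq (fun _ => 0) γ'.p (m + 1 + 1) j := by
      intro j hj
      rw [nuSeq_succ, nuSeq_succ, nuSeq_succ, nuSeq_succ, hPI, hPI1]
      exact agreeB hagm hpi1_lb hle j (by omega)
    have block3 := tail_agree γ γ' (m + 1 + 1) k le_rfl hbase
      (fun r hr1 hrk => hout r (by omega) hrk (by omega) (by omega)) k (by omega) le_rfl
    refine ⟨fun r hr1 hrk hne1 hne2 => ?_, by omega, by omega, hPI1, hQI1⟩
    rcases Nat.lt_or_ge r (m + 1) with hc | hc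
    · exact block1.2 r hr1 (by omega)
    · exact block3.2 r (by omega) hrk
end

section
/- Let α = (α_1, …, α_k) be a composition of positive integers such that α_i ≥ i for all 1 ≤ i ≤ k. Then I_α = Σ_{σ ∈ S_k} sign(σ) · R_{(α_1 − 1 + σ_1, α_2 − 2 + σ_2, …, α_k − k + σ_k)}, with the convention that R_β = 0 whenever β contains a part ≤ 0. -/
open scoped BigOperators

/-!
Expanding every ribbon function turns the right-hand side into a double sum over `σ` and over
the sets `S` of merged commas. For `S = ∅` the inner sum is the noncommutative determinant
`I_α`, because `H` of the parts `α_r - r + σ_r` are exactly the entries `H_{α_r + σ_r - r}`.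
For nonempty `S` with least element `i`, parts `i` and `i + 1` are merged, so the coarsening
only sees `σ_i + σ_{i+1}`; composing `σ` with the transposition of positions `i, i + 1` then
fixes the coarsening and flips the sign, and the sum over `σ` cancels. The hypothesis
`α_i ≥ i` makes every part positive, so no ribbon is killed by the convention `R_β = 0`.
-/

open Finset

theorem theta_empty {γ : Type} [Add γ] (i : ℕ) (l : List γ) : theta ∅ i l = l := by
  induction l generalizing i with
  | nil => simp [theta]
  | cons a t ih =>
    cases t with
    | nil => simp [theta]
    | cons b r => rw [theta]; simp [ih]

theorem theta_cons_of_not_mem {γ : Type} [Add γ] {S : Finset ℕ} {i : ℕ} (hi : i ∉ S) (c : γ)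
    {l : List γ} (hl : l ≠ []) : theta S i (c :: l) = c :: theta S (i + 1) l := by
  obtain ⟨d, l, rfl⟩ := List.exists_cons_of_ne_nil hl
  rw [theta, if_neg hi]

theorem theta_append_cons_cons_congr {γ : Type} [Add γ] {S : Finset ℕ} {pre : List γ}
    {j : ℕ} {a b a' b' : γ} (rest : List γ) (hmem : j + pre.length ∈ S)
    (hmin : ∀ m ∈ S, j + pre.length ≤ m) (hsum : a + b = a' + b') :
    theta S j (pre ++ a :: b :: rest) = theta S j (pre ++ a' :: b' :: rest) := by
  induction pre generalizing j with
  | nil =>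
    simp only [List.length_nil, add_zero] at hmem
    simp only [List.nil_append, theta, if_pos hmem, hsum]
  | cons c pre ih =>
    have hj : j ∉ S := fun h => by simpa using hmin j h
    rw [List.length_cons, ← add_assoc, Nat.add_right_comm] at hmem hmin
    rw [List.cons_append, List.cons_append, theta_cons_of_not_mem hj _ (by simp),
      theta_cons_of_not_mem hj _ (by simp), ih hmem hmin]

theorem List.ofFn_eq_append_cons_cons {γ : Type} {k : ℕ} (g : Fin k → γ) (p : ℕ)
    (hp : p + 1 < k) :
    List.ofFn g = (List.ofFn fun t : Fin p => g ⟨t, by omega⟩) ++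
      g ⟨p, by omega⟩ :: g ⟨p + 1, hp⟩ ::
        List.ofFn fun t : Fin (k - (p + 2)) => g ⟨p + 2 + t, by omega⟩ := by
  apply List.ext_getElem
  · simp; omega
  · intro n _ _
    simp only [List.getElem_ofFn, List.getElem_append, List.getElem_cons, List.length_ofFn]
    split_ifs <;> first | rfl | (congr 1; apply Fin.ext; simp; omega)

theorem theta_ofFn_congr {γ : Type} [Add γ] {k : ℕ} {f g : Fin k → γ} {S : Finset ℕ} {p : ℕ}
    (hp : p + 1 < k) (hagree : ∀ r : Fin k, (r : ℕ) ≠ p → (r : ℕ) ≠ p + 1 → f r = g r)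
    (hsum : f ⟨p, by omega⟩ + f ⟨p + 1, hp⟩ = g ⟨p, by omega⟩ + g ⟨p + 1, hp⟩)
    (hmem : p + 1 ∈ S) (hmin : ∀ m ∈ S, p + 1 ≤ m) :
    theta S 1 (List.ofFn f) = theta S 1 (List.ofFn g) := by
  have hpre : (List.ofFn fun t : Fin p => f ⟨t, by omega⟩) =
      List.ofFn fun t : Fin p => g ⟨t, by omega⟩ :=
    congrArg _ <| funext fun t => hagree _ (by simp; omega) (by simp; omega)
  have hsuf : (List.ofFn fun t : Fin (k - (p + 2)) => f ⟨p + 2 + t, by omega⟩) =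
      List.ofFn fun t : Fin (k - (p + 2)) => g ⟨p + 2 + t, by omega⟩ :=
    congrArg _ <| funext fun t => hagree _ (by simp; omega) (by simp; omega)
  rw [List.ofFn_eq_append_cons_cons f p hp, List.ofFn_eq_append_cons_cons g p hp, hpre, hsuf]
  exact theta_append_cons_cons_congr _ (by simpa [add_comm] using hmem)
    (by simpa [add_comm] using hmin) hsum

theorem Equiv.Perm.sum_sign_smul_eq_zero_of_mul_swap {ι M : Type*} [DecidableEq ι] [Fintype ι]
    [AddCommGroup M] {F : Equiv.Perm ι → M} {a b : ι} (hab : a ≠ b)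
    (hF : ∀ σ, F (σ * Equiv.swap a b) = F σ) :
    ∑ σ : Equiv.Perm ι, (Equiv.Perm.sign σ : ℤ) • F σ = 0 := by
  refine Finset.sum_involution (fun σ _ => σ * Equiv.swap a b) (fun σ _ => ?_)
    (fun σ _ _ h => hab ?_) (fun _ _ => mem_univ _) (fun σ _ => by simp [mul_assoc])
  · rw [hF, Equiv.Perm.sign_mul, Equiv.Perm.sign_swap hab]
    simp
  · exact (by simpa using congrArg (· a) (mul_left_cancel (h.trans (mul_one σ).symm)) : b = a).symm

def shiftedShape (k : ℕ) (α : ℕ → ℤ) (σ : Equiv.Perm (Fin k)) : List ℤ :=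
  List.ofFn fun r : Fin k => α (r.1 + 1) - ((r.1 : ℤ) + 1) + (((σ r : ℕ) : ℤ) + 1)

theorem length_shiftedShape (k : ℕ) (α : ℕ → ℤ) (σ : Equiv.Perm (Fin k)) :
    (shiftedShape k α σ).length = k := by
  simp [shiftedShape]

theorem pos_of_mem_shiftedShape {k : ℕ} {α : ℕ → ℤ}
    (hbig : ∀ i, 1 ≤ i → i ≤ k → (i : ℤ) ≤ α i) (σ : Equiv.Perm (Fin k)) :
    ∀ x ∈ shiftedShape k α σ, 0 < x := by
  rintro x hx
  obtain ⟨r, rfl⟩ := List.mem_ofFn.mp hx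
  have := hbig (r + 1) (by omega) r.isLt
  push_cast at this
  omega

theorem theta_shiftedShape_mul_swap {k : ℕ} (α : ℕ → ℤ) {S : Finset ℕ} {p : ℕ}
    (hp : p + 1 < k) (hmem : p + 1 ∈ S) (hmin : ∀ m ∈ S, p + 1 ≤ m) (σ : Equiv.Perm (Fin k)) :
    theta S 1 (shiftedShape k α (σ * Equiv.swap ⟨p, by omega⟩ ⟨p + 1, hp⟩)) =
      theta S 1 (shiftedShape k α σ) := by
  refine theta_ofFn_congr hp (fun r hrp hrq => ?_) ?_ hmem hmin
  · rw [Equiv.Perm.mul_apply, Equiv.swap_apply_of_ne_of_ne (Fin.ne_of_val_ne hrp)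
      (Fin.ne_of_val_ne hrq)]
  · simp only [Equiv.Perm.mul_apply, Equiv.swap_apply_left, Equiv.swap_apply_right]
    push_cast
    ring

theorem sum_sign_smul_theta_shiftedShape_eq_zero {M : Type*} [AddCommGroup M] {k : ℕ}
    (α : ℕ → ℤ) (F : List ℤ → M) {S : Finset ℕ} (hS : S ⊆ Icc 1 (k - 1)) (hne : S.Nonempty) :
    ∑ σ : Equiv.Perm (Fin k), (Equiv.Perm.sign σ : ℤ) • F (theta S 1 (shiftedShape k α σ)) = 0 := by
  have hbounds := Finset.mem_Icc.mp (hS (S.min'_mem hne))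
  obtain ⟨p, hp_eq⟩ : ∃ p, S.min' hne = p + 1 := ⟨_, (Nat.succ_pred_eq_of_pos (by omega)).symm⟩
  have hp : p + 1 < k := by omega
  refine Equiv.Perm.sum_sign_smul_eq_zero_of_mul_swap (a := ⟨p, by omega⟩) (b := ⟨p + 1, hp⟩)
    (by simp) fun σ => ?_
  rw [theta_shiftedShape_mul_swap α hp (hp_eq ▸ S.min'_mem hne)
    (fun m hm => hp_eq ▸ S.min'_le m hm) σ]

theorem Imm_eq_sum_sign_smul_Hlist_shiftedShape (k : ℕ) (α : ℕ → ℤ) :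
    Imm k α = ∑ σ : Equiv.Perm (Fin k), (Equiv.Perm.sign σ : ℤ) • Hlist (shiftedShape k α σ) := by
  refine Finset.sum_congr rfl fun σ _ => ?_
  rw [Hlist, shiftedShape, List.map_ofFn]
  congr 3
  funext r
  simp only [Function.comp_apply]
  congr 1
  ring

theorem immaculate_ribbon_expansion_staircase_general (k : ℕ) (α : ℕ → ℤ)
    (hbig : ∀ i, 1 ≤ i → i ≤ k → (i : ℤ) ≤ α i) :
    Imm k α = ∑ σ : Equiv.Perm (Fin k),
      (Equiv.Perm.sign σ : ℤ) •
        Ribbon (List.ofFn fun r : Fin k =>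
          α (r.1 + 1) - ((r.1 : ℤ) + 1) + (((σ r : ℕ) : ℤ) + 1)) := by
  change _ = ∑ σ : Equiv.Perm (Fin k), (Equiv.Perm.sign σ : ℤ) • Ribbon (shiftedShape k α σ)
  simp only [Ribbon, if_pos (pos_of_mem_shiftedShape hbig _), length_shiftedShape,
    Finset.smul_sum]
  rw [Finset.sum_comm, Finset.sum_eq_single_of_mem ∅ (empty_mem_powerset _)
    fun S hS hne => sum_sign_smul_theta_shiftedShape_eq_zero α
      (fun β => (-1 : NSym) ^ (k - β.length) * Hlist β) (mem_powerset.mp hS)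
      (nonempty_iff_ne_empty.mpr hne)]
  simpa only [theta_empty, length_shiftedShape, Nat.sub_self, pow_zero, one_mul] using
    Imm_eq_sum_sign_smul_Hlist_shiftedShape k α

/-- **Theorem (ribbon expansion, staircase-dominating shapes).** If `α` is a composition
of positive integers with `α_i ≥ i` for all `1 ≤ i ≤ k`, then
`I_α = Σ_{σ ∈ S_k} sign(σ) R_{(α_1 − 1 + σ_1, …, α_k − k + σ_k)}`,
with the convention that `R_β = 0` whenever `β` has a part `≤ 0`. -/
theorem immaculate_ribbon_expansion_staircase (k : ℕ) (hk : 1 ≤ k) (α : ℕ → ℤ)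
    (hpos : ∀ i, 1 ≤ i → i ≤ k → 0 < α i)
    (hbig : ∀ i, 1 ≤ i → i ≤ k → (i : ℤ) ≤ α i) :
    Imm k α = ∑ σ : Equiv.Perm (Fin k),
      (Equiv.Perm.sign σ : ℤ) •
        Ribbon (List.ofFn fun r : Fin k =>
          α (r.1 + 1) - ((r.1 : ℤ) + 1) + (((σ r : ℕ) : ℤ) + 1)) :=
  immaculate_ribbon_expansion_staircase_general k α hbig
end
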